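/- arXiv:2208.09721 — 6 statements merged into one kernel-verified Lean document; each statement's English description precedes it below -/
import Mathlib

section
/- Fix relatively prime integers κ, N with 0 < κ < N, integers n > 1 and l ≥ 1 with 2l ≤ n, and let r = (r_1,…,r_l) be a sequence of positive integers with r_i ≡ −1 (mod N) for all i (so that N_r = 1). Set d_r = nlk + l(l−1)k'/2 − l − (r_1 + ⋯ + r_l). Then for every l-subset I of {1,…,n}: the polynomial f^0_{r,I}(z) is homogeneous of degree d_r (or zero), and every monomial of f_{r,I}(z) − f^0_{r,I}(z) has total degree strictly less than d_r; in other words, f_{r,I}(z) = f^0_{r,I}(z) + (terms of degree < d_r). -/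
/-- The "string" (Pochhammer-type) polynomial `[x]_m = ∏_{i=1}^m (x - (i-1)κ)`. -/
noncomputable def str {R : Type*} [CommRing R] (κ : ℤ) (m : ℕ) (x : R) : R :=
  ∏ i ∈ Finset.range m, (x - (((i : ℤ) * κ : ℤ) : R))

section Weighted
variable {n l : ℕ}

/-- weight of an exponent finsupp -/
def wt {σ : Type*} (m : σ →₀ ℕ) : ℕ := m.sum fun _ e => e

lemma wt_add {σ : Type*} (m m' : σ →₀ ℕ) : wt (m + m') = wt m + wt m' :=
  Finsupp.sum_add_index' (fun _ => rfl) (fun _ _ _ => rfl)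

lemma wt_zero {σ : Type*} : wt (0 : σ →₀ ℕ) = 0 := Finsupp.sum_zero_index

abbrev PP (l n : ℕ) := MvPolynomial (Fin l) (MvPolynomial (Fin n) ℤ)

def Jle (D : ℕ) (p : PP l n) : Prop :=
  ∀ m μ, μ ∈ (MvPolynomial.coeff m p).support → wt m + wt μ ≤ D

def Jlt (D : ℕ) (p : PP l n) : Prop :=
  ∀ m μ, μ ∈ (MvPolynomial.coeff m p).support → wt m + wt μ < D

def Jhom (D : ℕ) (p : PP l n) : Prop :=
  ∀ m μ, μ ∈ (MvPolynomial.coeff m p).support → wt m + wt μ = D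

lemma Jle_zero (D : ℕ) : Jle D (0 : PP l n) := by
  intro m μ h; simp [MvPolynomial.coeff_zero] at h

lemma Jlt_zero (D : ℕ) : Jlt D (0 : PP l n) := by
  intro m μ h; simp [MvPolynomial.coeff_zero] at h

lemma Jhom.jle {D : ℕ} {p : PP l n} (h : Jhom D p) : Jle D p :=
  fun m μ hm => le_of_eq (h m μ hm)

lemma Jlt.jle {D : ℕ} {p : PP l n} (h : Jlt D p) : Jle D p :=
  fun m μ hm => le_of_lt (h m μ hm)

lemma Jle.add {D : ℕ} {p q : PP l n} (hp : Jle D p) (hq : Jle D q) : Jle D (p + q) := by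
  intro m μ hm
  rw [MvPolynomial.coeff_add] at hm
  rcases Finset.mem_union.1 (Finsupp.support_add hm) with h | h
  · exact hp m μ h
  · exact hq m μ h

lemma Jlt.add {D : ℕ} {p q : PP l n} (hp : Jlt D p) (hq : Jlt D q) : Jlt D (p + q) := by
  intro m μ hm
  rw [MvPolynomial.coeff_add] at hm
  rcases Finset.mem_union.1 (Finsupp.support_add hm) with h | h
  · exact hp m μ h
  · exact hq m μ h

lemma Jle.neg {D : ℕ} {p : PP l n} (hp : Jle D p) : Jle D (-p) := by
  intro m μ hm
  rw [MvPolynomial.coeff_neg] at hm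
  exact hp m μ (by simpa using hm)

lemma Jlt.neg {D : ℕ} {p : PP l n} (hp : Jlt D p) : Jlt D (-p) := by
  intro m μ hm
  rw [MvPolynomial.coeff_neg] at hm
  exact hp m μ (by simpa using hm)

lemma Jhom.add {D : ℕ} {p q : PP l n} (hp : Jhom D p) (hq : Jhom D q) : Jhom D (p + q) := by
  intro m μ hm
  rw [MvPolynomial.coeff_add] at hm
  rcases Finset.mem_union.1 (Finsupp.support_add hm) with h | h
  · exact hp m μ h
  · exact hq m μ h

lemma Jhom.neg {D : ℕ} {p : PP l n} (hp : Jhom D p) : Jhom D (-p) := by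
  intro m μ hm
  rw [MvPolynomial.coeff_neg] at hm
  exact hp m μ (by simpa using hm)

lemma Jhom.sub {D : ℕ} {p q : PP l n} (hp : Jhom D p) (hq : Jhom D q) : Jhom D (p - q) := by
  rw [sub_eq_add_neg]; exact hp.add hq.neg


lemma mem_support_C {σ : Type*} {R : Type*} [CommSemiring R] [DecidableEq σ] {c : R} {μ : σ →₀ ℕ}
    (h : μ ∈ (MvPolynomial.C c : MvPolynomial σ R).support) : μ = 0 ∧ c ≠ 0 := by
  have h' := MvPolynomial.mem_support_iff.1 h
  rw [MvPolynomial.coeff_C] at h'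
  split_ifs at h' with h0
  · exact ⟨h0.symm, h'⟩
  · exact absurd rfl h'

/-- decomposition of support of a product -/
lemma exists_decomp {p q : PP l n} {m : Fin l →₀ ℕ} {μ : Fin n →₀ ℕ}
    (h : μ ∈ (MvPolynomial.coeff m (p * q)).support) :
    ∃ m₁ m₂ μ₁ μ₂, m₁ + m₂ = m ∧ μ₁ + μ₂ = μ ∧
      μ₁ ∈ (MvPolynomial.coeff m₁ p).support ∧ μ₂ ∈ (MvPolynomial.coeff m₂ q).support := by
  rw [MvPolynomial.coeff_mul] at h
  obtain ⟨x, hx, hμ⟩ := Finset.mem_biUnion.1 (MvPolynomial.support_sum h)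
  obtain ⟨μ₁, h1, μ₂, h2, hadd⟩ := Finset.mem_add.1 (MvPolynomial.support_mul _ _ hμ)
  exact ⟨x.1, x.2, μ₁, μ₂, Finset.HasAntidiagonal.mem_antidiagonal.1 hx, hadd, h1, h2⟩

lemma Jle.mul {D₁ D₂ : ℕ} {p q : PP l n} (hp : Jle D₁ p) (hq : Jle D₂ q) :
    Jle (D₁ + D₂) (p * q) := by
  intro m μ hm
  obtain ⟨m₁, m₂, μ₁, μ₂, rfl, rfl, h1, h2⟩ := exists_decomp hm
  rw [wt_add, wt_add]
  have := hp _ _ h1; have := hq _ _ h2; omega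

lemma Jlt.mul_jle {D₁ D₂ : ℕ} {p q : PP l n} (hp : Jlt D₁ p) (hq : Jle D₂ q) :
    Jlt (D₁ + D₂) (p * q) := by
  intro m μ hm
  obtain ⟨m₁, m₂, μ₁, μ₂, rfl, rfl, h1, h2⟩ := exists_decomp hm
  rw [wt_add, wt_add]
  have := hp _ _ h1; have := hq _ _ h2; omega

lemma Jle.mul_jlt {D₁ D₂ : ℕ} {p q : PP l n} (hp : Jle D₁ p) (hq : Jlt D₂ q) :
    Jlt (D₁ + D₂) (p * q) := by
  intro m μ hm
  obtain ⟨m₁, m₂, μ₁, μ₂, rfl, rfl, h1, h2⟩ := exists_decomp hm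
  rw [wt_add, wt_add]
  have := hp _ _ h1; have := hq _ _ h2; omega

lemma Jhom.mul {D₁ D₂ : ℕ} {p q : PP l n} (hp : Jhom D₁ p) (hq : Jhom D₂ q) :
    Jhom (D₁ + D₂) (p * q) := by
  intro m μ hm
  obtain ⟨m₁, m₂, μ₁, μ₂, rfl, rfl, h1, h2⟩ := exists_decomp hm
  rw [wt_add, wt_add]
  have := hp _ _ h1; have := hq _ _ h2; omega

lemma Jhom_one : Jhom 0 (1 : PP l n) := by
  intro m μ hm
  rw [show (1 : PP l n) = MvPolynomial.C 1 from rfl, MvPolynomial.coeff_C] at hm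
  split_ifs at hm with h
  · subst h
    rw [show ((1 : MvPolynomial (Fin n) ℤ)) = MvPolynomial.C 1 from rfl] at hm
    obtain ⟨h', -⟩ := mem_support_C hm
    subst h'
    simp [wt_zero]
  · simp at hm

lemma Jle_one : Jle 0 (1 : PP l n) := Jhom_one.jle

lemma Jhom.sum {D : ℕ} {α : Type*} {s : Finset α} {f : α → PP l n}
    (h : ∀ a ∈ s, Jhom D (f a)) : Jhom D (∑ a ∈ s, f a) := by
  classical
  induction s using Finset.cons_induction with
  | empty => simpa using (show Jhom D (0 : PP l n) from fun m μ hm => by simp [MvPolynomial.coeff_zero] at hm)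
  | cons a s ha ih =>
    rw [Finset.sum_cons]
    exact (h a (Finset.mem_cons_self _ _)).add (ih fun b hb => h b (Finset.mem_cons_of_mem hb))

lemma Jlt.sum {D : ℕ} {α : Type*} {s : Finset α} {f : α → PP l n}
    (h : ∀ a ∈ s, Jlt D (f a)) : Jlt D (∑ a ∈ s, f a) := by
  classical
  induction s using Finset.cons_induction with
  | empty => simpa using Jlt_zero D
  | cons a s ha ih =>
    rw [Finset.sum_cons]
    exact (h a (Finset.mem_cons_self _ _)).add (ih fun b hb => h b (Finset.mem_cons_of_mem hb))

lemma Jle.sum {D : ℕ} {α : Type*} {s : Finset α} {f : α → PP l n}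
    (h : ∀ a ∈ s, Jle D (f a)) : Jle D (∑ a ∈ s, f a) := by
  classical
  induction s using Finset.cons_induction with
  | empty => simpa using Jle_zero D
  | cons a s ha ih =>
    rw [Finset.sum_cons]
    exact (h a (Finset.mem_cons_self _ _)).add (ih fun b hb => h b (Finset.mem_cons_of_mem hb))

lemma Jhom.prod {α : Type*} {s : Finset α} {d : α → ℕ} {f : α → PP l n}
    (h : ∀ a ∈ s, Jhom (d a) (f a)) : Jhom (∑ a ∈ s, d a) (∏ a ∈ s, f a) := by
  classical
  induction s using Finset.cons_induction with
  | empty => simpa using Jhom_one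
  | cons a s ha ih =>
    rw [Finset.sum_cons, Finset.prod_cons]
    exact (h a (Finset.mem_cons_self _ _)).mul (ih fun b hb => h b (Finset.mem_cons_of_mem hb))

lemma Jle.prod {α : Type*} {s : Finset α} {d : α → ℕ} {f : α → PP l n}
    (h : ∀ a ∈ s, Jle (d a) (f a)) : Jle (∑ a ∈ s, d a) (∏ a ∈ s, f a) := by
  classical
  induction s using Finset.cons_induction with
  | empty => simpa using Jle_one
  | cons a s ha ih =>
    rw [Finset.sum_cons, Finset.prod_cons]
    exact (h a (Finset.mem_cons_self _ _)).mul (ih fun b hb => h b (Finset.mem_cons_of_mem hb))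

lemma Jhom.pow {D : ℕ} {p : PP l n} (hp : Jhom D p) (e : ℕ) : Jhom (e * D) (p ^ e) := by
  induction e with
  | zero => simpa using Jhom_one
  | succ e ih =>
    rw [pow_succ, Nat.succ_mul]
    exact ih.mul hp

lemma Jhom_X (i : Fin l) : Jhom 1 (MvPolynomial.X i : PP l n) := by
  intro m μ hm
  rw [MvPolynomial.coeff_X'] at hm
  split_ifs at hm with h
  · subst h
    obtain ⟨h', -⟩ := mem_support_C hm
    subst h'
    simp [wt_zero, wt, Finsupp.sum_single_index]
  · simp at hm

lemma Jhom_CX (a : Fin n) : Jhom 1 (MvPolynomial.C (MvPolynomial.X a) : PP l n) := by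
  intro m μ hm
  rw [MvPolynomial.coeff_C] at hm
  split_ifs at hm with h
  · subst h
    rw [MvPolynomial.support_X] at hm
    simp at hm
    subst hm
    simp [wt_zero, wt, Finsupp.sum_single_index]
  · simp at hm

lemma Jle_intC (c : ℤ) : Jle 0 ((c : PP l n)) := by
  intro m μ hm
  have : (c : PP l n) = MvPolynomial.C (MvPolynomial.C c) := by
    simp [map_intCast]
  rw [this, MvPolynomial.coeff_C] at hm
  split_ifs at hm with h
  · subst h
    obtain ⟨h', -⟩ := mem_support_C hm
    subst h'
    simp [wt_zero]
  · simp at hm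

end Weighted

section Close
variable {n l : ℕ}

/-- `p` equals `q` plus terms of joint degree `< D`, with both of joint degree `≤ D`. -/
def Close (D : ℕ) (p q : PP l n) : Prop := Jle D p ∧ Jle D q ∧ Jlt D (p - q)

lemma Close.mul {D₁ D₂ : ℕ} {p₁ q₁ p₂ q₂ : PP l n} (h₁ : Close D₁ p₁ q₁)
    (h₂ : Close D₂ p₂ q₂) : Close (D₁ + D₂) (p₁ * p₂) (q₁ * q₂) := by
  obtain ⟨hp₁, hq₁, hd₁⟩ := h₁
  obtain ⟨hp₂, hq₂, hd₂⟩ := h₂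
  refine ⟨hp₁.mul hp₂, hq₁.mul hq₂, ?_⟩
  have : p₁ * p₂ - q₁ * q₂ = p₁ * (p₂ - q₂) + (p₁ - q₁) * q₂ := by ring
  rw [this]
  exact (hp₁.mul_jlt hd₂).add (hd₁.mul_jle hq₂)

lemma Close.prod {α : Type*} {s : Finset α} {d : α → ℕ} {f g : α → PP l n}
    (h : ∀ a ∈ s, Close (d a) (f a) (g a)) :
    Close (∑ a ∈ s, d a) (∏ a ∈ s, f a) (∏ a ∈ s, g a) := by
  classical
  induction s using Finset.cons_induction with
  | empty =>
    refine ⟨by simpa using Jle_one, by simpa using Jle_one, by simpa using Jlt_zero 0⟩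
  | cons a s ha ih =>
    rw [Finset.sum_cons, Finset.prod_cons, Finset.prod_cons]
    exact (h a (Finset.mem_cons_self _ _)).mul (ih fun b hb => h b (Finset.mem_cons_of_mem hb))

lemma Close.sum {D : ℕ} {α : Type*} {s : Finset α} {f g : α → PP l n}
    (h : ∀ a ∈ s, Close D (f a) (g a)) :
    Close D (∑ a ∈ s, f a) (∑ a ∈ s, g a) := by
  refine ⟨Jle.sum (fun a ha => (h a ha).1), Jle.sum (fun a ha => (h a ha).2.1), ?_⟩
  rw [← Finset.sum_sub_distrib]
  exact Jlt.sum (fun a ha => (h a ha).2.2)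

lemma Jle.mono {n l : ℕ} {D D' : ℕ} {p : PP l n} (h : Jle D p) (hD : D ≤ D') : Jle D' p :=
  fun m μ hm => le_trans (h m μ hm) hD

lemma Jlt_intC (c : ℤ) : Jlt 1 ((c : PP l n)) := by
  intro m μ hm
  have := Jle_intC (l := l) (n := n) c m μ hm
  omega

/-- The key leading-term lemma: `str κ m (v + c)` is `v^m` plus lower joint degree,
for `v` jointly homogeneous of degree 1. -/
lemma close_str (κ : ℤ) {v : PP l n} (hv : Jhom 1 v) (c : ℤ) (m : ℕ) :
    Close m (str κ m (v + (c : PP l n))) (v ^ m) := by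
  induction m with
  | zero =>
    refine ⟨by simpa [str] using Jle_one, by simpa using Jle_one, by simpa [str] using Jlt_zero 0⟩
  | succ m ih =>
    have hstep : str κ (m + 1) (v + (c : PP l n)) =
        str κ m (v + (c : PP l n)) * (v + ((c - (m : ℤ) * κ : ℤ) : PP l n)) := by
      rw [str, Finset.prod_range_succ, ← str]
      congr 1
      push_cast
      ring
    rw [hstep, pow_succ]
    refine Close.mul ih ⟨?_, ?_, ?_⟩
    · exact (hv.jle.add ((Jle_intC _).mono (by omega)))
    · exact hv.jle
    · simpa using Jlt_intC (l := l) (n := n) (c - (m : ℤ) * κ)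

/-- The summand `U_I^τ(t,z)` of the qKZ integrand. -/
noncomputable def Utau (κ : ℤ) (k k' : ℕ) {n l : ℕ} (I : Finset (Fin n)) (hI : I.card = l)
    (τ : Equiv.Perm (Fin l)) : MvPolynomial (Fin l) (MvPolynomial (Fin n) ℤ) :=
  let t : Fin l → MvPolynomial (Fin l) (MvPolynomial (Fin n) ℤ) := MvPolynomial.X
  let z : Fin n → MvPolynomial (Fin l) (MvPolynomial (Fin n) ℤ) :=
    fun a => MvPolynomial.C (MvPolynomial.X a)
  let e : Fin l → Fin n := fun i => ((I.orderIsoOfFin hI) i : Fin n)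
  (∏ p ∈ Finset.univ.filter (fun p : Fin l × Fin l => p.1 < p.2 ∧ τ p.1 < τ p.2),
      str κ k' (t p.1 - t p.2 + 1)) *
  (∏ p ∈ Finset.univ.filter (fun p : Fin l × Fin l => p.1 < p.2 ∧ τ p.2 < τ p.1),
      str κ k' (t p.1 - t p.2 + 1 - (κ : MvPolynomial (Fin l) (MvPolynomial (Fin n) ℤ)))) *
  ∏ i : Fin l,
    ((∏ s ∈ Finset.univ.filter (fun s : Fin n => s < e i),
        str κ k (t (τ i) - z s - (κ : MvPolynomial (Fin l) (MvPolynomial (Fin n) ℤ)))) *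
      str κ (k - 1) (t (τ i) - z (e i) - (κ : MvPolynomial (Fin l) (MvPolynomial (Fin n) ℤ))) *
      (∏ s ∈ Finset.univ.filter (fun s : Fin n => e i < s), str κ k (t (τ i) - z s)))

/-- The qKZ integrand `U_I(t,z) = Σ_{τ∈S_l} U_I^τ(t,z)`. -/
noncomputable def UU (κ : ℤ) (k k' : ℕ) {n l : ℕ} (I : Finset (Fin n)) (hI : I.card = l) :
    MvPolynomial (Fin l) (MvPolynomial (Fin n) ℤ) :=
  ∑ τ : Equiv.Perm (Fin l), Utau κ k k' I hI τ

/-- The homogeneous KZ integrand `U^0_I(t,z) = Σ_{τ∈S_l} Φ^0(t,z)·∏_i 1/(t_{τi}−z_{a_i})`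
(defined to be `0` if `I.card ≠ l`). -/
noncomputable def U0 (k k' : ℕ) {n : ℕ} (l : ℕ) (I : Finset (Fin n)) :
    MvPolynomial (Fin l) (MvPolynomial (Fin n) ℤ) :=
  if hI : I.card = l then
    let t : Fin l → MvPolynomial (Fin l) (MvPolynomial (Fin n) ℤ) := MvPolynomial.X
    let z : Fin n → MvPolynomial (Fin l) (MvPolynomial (Fin n) ℤ) :=
      fun a => MvPolynomial.C (MvPolynomial.X a)
    let e : Fin l → Fin n := fun i => ((I.orderIsoOfFin hI) i : Fin n)
    ∑ τ : Equiv.Perm (Fin l),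
      (∏ p ∈ Finset.univ.filter (fun p : Fin l × Fin l => p.1 < p.2),
          (t p.1 - t p.2) ^ k') *
      ∏ i : Fin l,
        ((t (τ i) - z (e i)) ^ (k - 1) *
          ∏ a ∈ Finset.univ.erase (e i), (t (τ i) - z a) ^ k)
  else 0

section Structural

open Equiv Finset MvPolynomial

variable {n l : ℕ} (κ : ℤ) (k k' : ℕ)

/-- the `τ`-summand of `U^0_I`, written in the granularity of `Utau`. -/
noncomputable def U0tau (k k' : ℕ) {n l : ℕ} (e : Fin l → Fin n) (τ : Equiv.Perm (Fin l)) :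
    PP l n :=
  (∏ p ∈ Finset.univ.filter (fun p : Fin l × Fin l => p.1 < p.2 ∧ τ p.1 < τ p.2),
      (MvPolynomial.X p.1 - MvPolynomial.X p.2) ^ k') *
  (∏ p ∈ Finset.univ.filter (fun p : Fin l × Fin l => p.1 < p.2 ∧ τ p.2 < τ p.1),
      (MvPolynomial.X p.1 - MvPolynomial.X p.2) ^ k') *
  ∏ i : Fin l,
    ((∏ s ∈ Finset.univ.filter (fun s : Fin n => s < e i),
        (MvPolynomial.X (τ i) - MvPolynomial.C (MvPolynomial.X s)) ^ k) *
      (MvPolynomial.X (τ i) - MvPolynomial.C (MvPolynomial.X (e i))) ^ (k - 1) *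
      (∏ s ∈ Finset.univ.filter (fun s : Fin n => e i < s),
        (MvPolynomial.X (τ i) - MvPolynomial.C (MvPolynomial.X s)) ^ k))

lemma filter1_eq (τ : Equiv.Perm (Fin l)) :
    Finset.univ.filter (fun p : Fin l × Fin l => p.1 < p.2 ∧ τ p.1 < τ p.2) =
      (Finset.univ.filter (fun p : Fin l × Fin l => p.1 < p.2)).filter
        (fun p => τ p.1 < τ p.2) := by
  rw [Finset.filter_filter]

lemma filter2_eq (τ : Equiv.Perm (Fin l)) :
    Finset.univ.filter (fun p : Fin l × Fin l => p.1 < p.2 ∧ τ p.2 < τ p.1) =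
      (Finset.univ.filter (fun p : Fin l × Fin l => p.1 < p.2)).filter
        (fun p => ¬ (τ p.1 < τ p.2)) := by
  rw [Finset.filter_filter]
  apply Finset.filter_congr
  intro p _
  constructor
  · rintro ⟨h1, h2⟩; exact ⟨h1, lt_asymm h2⟩
  · rintro ⟨h1, h2⟩
    refine ⟨h1, lt_of_le_of_ne (not_lt.mp h2) ?_⟩
    intro h
    exact absurd (τ.injective h) (ne_of_lt h1).symm

lemma lt_gt_union (e : Fin n) :
    (Finset.univ.filter (fun s : Fin n => s < e)) ∪
      (Finset.univ.filter (fun s : Fin n => e < s)) = Finset.univ.erase e := by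
  ext s
  simp only [Finset.mem_union, Finset.mem_filter, Finset.mem_univ, true_and, Finset.mem_erase]
  constructor
  · rintro (h | h)
    · exact ⟨ne_of_lt h, trivial⟩
    · exact ⟨(ne_of_lt h).symm, trivial⟩
  · rintro ⟨h, -⟩
    exact lt_or_gt_of_ne h

lemma lt_gt_disjoint (e : Fin n) :
    Disjoint (Finset.univ.filter (fun s : Fin n => s < e))
      (Finset.univ.filter (fun s : Fin n => e < s)) := by
  rw [Finset.disjoint_filter]
  intro s _ h1 h2
  exact lt_asymm h1 h2

lemma card_lt_add_card_gt (hn1 : 0 < n) (e : Fin n) :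
    (Finset.univ.filter (fun s : Fin n => s < e)).card +
      (Finset.univ.filter (fun s : Fin n => e < s)).card = n - 1 := by
  rw [← Finset.card_union_of_disjoint (lt_gt_disjoint e), lt_gt_union,
    Finset.card_erase_of_mem (Finset.mem_univ e), Finset.card_univ, Fintype.card_fin]

lemma card_pairs : (Finset.univ.filter (fun p : Fin l × Fin l => p.1 < p.2)).card =
    l * (l - 1) / 2 := by
  rw [Finset.card_eq_sum_card_fiberwise (f := Prod.snd) (t := Finset.univ)
    (fun p _ => Finset.mem_univ p.2)]
  have h : ∀ j : Fin l,
      ((Finset.univ.filter (fun p : Fin l × Fin l => p.1 < p.2)).filter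
        (fun p => p.2 = j)).card = (j : ℕ) := by
    intro j
    have hset : (Finset.univ.filter (fun p : Fin l × Fin l => p.1 < p.2)).filter
        (fun p => p.2 = j) = (Finset.Iio j).map
          ⟨fun i => (i, j), fun a b h => by simpa using congrArg Prod.fst h⟩ := by
      ext p
      simp only [Finset.mem_filter, Finset.mem_univ, true_and, Finset.mem_map,
        Finset.mem_Iio, Function.Embedding.coeFn_mk]
      constructor
      · rintro ⟨h1, rfl⟩; exact ⟨p.1, h1, rfl⟩
      · rintro ⟨i, hi, rfl⟩; exact ⟨hi, rfl⟩
    rw [hset, Finset.card_map, Fin.card_Iio]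
  rw [Finset.sum_congr rfl (fun j _ => h j), Fin.sum_univ_eq_sum_range (fun i => i) l,
    Finset.sum_range_id]

/-- total joint degree -/
def DD (n l k k' : ℕ) : ℕ := l * (n * k - 1) + l * (l - 1) / 2 * k'

lemma deg_calc (hk : 1 ≤ k) (hn1 : 0 < n) (τ : Equiv.Perm (Fin l)) (e : Fin l → Fin n) :
    ((∑ _p ∈ Finset.univ.filter (fun p : Fin l × Fin l => p.1 < p.2 ∧ τ p.1 < τ p.2), k') +
      (∑ _p ∈ Finset.univ.filter (fun p : Fin l × Fin l => p.1 < p.2 ∧ τ p.2 < τ p.1), k')) +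
    (∑ i : Fin l, ((∑ _s ∈ Finset.univ.filter (fun s : Fin n => s < e i), k) + (k - 1) +
      ∑ _s ∈ Finset.univ.filter (fun s : Fin n => e i < s), k)) = DD n l k k' := by
  simp only [Finset.sum_const, smul_eq_mul]
  have hpair : (Finset.univ.filter (fun p : Fin l × Fin l => p.1 < p.2 ∧ τ p.1 < τ p.2)).card +
      (Finset.univ.filter (fun p : Fin l × Fin l => p.1 < p.2 ∧ τ p.2 < τ p.1)).card =
      l * (l - 1) / 2 := by
    rw [filter1_eq, filter2_eq, Finset.card_filter_add_card_filter_not, card_pairs]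
  have hin : ∀ i : Fin l,
      (Finset.univ.filter (fun s : Fin n => s < e i)).card * k + (k - 1) +
        (Finset.univ.filter (fun s : Fin n => e i < s)).card * k = n * k - 1 := by
    intro i
    have h2 := card_lt_add_card_gt hn1 (e i)
    obtain ⟨n', rfl⟩ := Nat.exists_eq_add_of_lt hn1
    obtain ⟨k'', rfl⟩ := Nat.exists_eq_add_of_le hk
    set a := (Finset.univ.filter (fun s : Fin (0 + n' + 1) => s < e i)).card
    set b := (Finset.univ.filter (fun s : Fin (0 + n' + 1) => e i < s)).card
    have : a + b = n' := by omega
    rw [show a * (1 + k'') + (1 + k'' - 1) + b * (1 + k'') =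
      (a + b) * (1 + k'') + k'' by ring_nf; omega, this]
    ring_nf
    omega
  rw [Finset.sum_congr rfl (fun i _ => hin i), Finset.sum_const, smul_eq_mul, Finset.card_univ,
    Fintype.card_fin]
  rw [← Nat.add_mul, hpair, DD]
  ring

end Structural

section Structural2

open Equiv Finset MvPolynomial

variable {n l : ℕ}

lemma jhom_sub_tt (i j : Fin l) :
    Jhom 1 ((MvPolynomial.X i - MvPolynomial.X j : PP l n)) :=
  (Jhom_X i).sub (Jhom_X j)

lemma jhom_sub_tz (i : Fin l) (a : Fin n) :
    Jhom 1 ((MvPolynomial.X i - MvPolynomial.C (MvPolynomial.X a) : PP l n)) :=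
  (Jhom_X i).sub (Jhom_CX a)

lemma close_Utau (κ : ℤ) (k k' : ℕ) (hk : 1 ≤ k) (hn1 : 0 < n)
    (I : Finset (Fin n)) (hI : I.card = l) (τ : Equiv.Perm (Fin l)) :
    Close (DD n l k k') (Utau κ k k' I hI τ)
      (U0tau k k' (fun i => ((I.orderIsoOfFin hI) i : Fin n)) τ) := by
  set e : Fin l → Fin n := fun i => ((I.orderIsoOfFin hI) i : Fin n) with he
  have main :
      Close (((∑ _p ∈ Finset.univ.filter
          (fun p : Fin l × Fin l => p.1 < p.2 ∧ τ p.1 < τ p.2), k') +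
        (∑ _p ∈ Finset.univ.filter
          (fun p : Fin l × Fin l => p.1 < p.2 ∧ τ p.2 < τ p.1), k')) +
        (∑ i : Fin l, ((∑ _s ∈ Finset.univ.filter (fun s : Fin n => s < e i), k) + (k - 1) +
          ∑ _s ∈ Finset.univ.filter (fun s : Fin n => e i < s), k)))
        (Utau κ k k' I hI τ) (U0tau k k' e τ) := by
    simp only [Utau, U0tau]
    refine Close.mul (Close.mul (Close.prod ?_) (Close.prod ?_)) (Close.prod ?_)
    · intro p _
      have harg : (MvPolynomial.X p.1 - MvPolynomial.X p.2 + 1 : PP l n) =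
          (MvPolynomial.X p.1 - MvPolynomial.X p.2) + ((1 : ℤ) : PP l n) := by
        push_cast; ring
      rw [harg]
      exact close_str κ (jhom_sub_tt p.1 p.2) 1 k'
    · intro p _
      have harg : (MvPolynomial.X p.1 - MvPolynomial.X p.2 + 1 - (κ : PP l n) : PP l n) =
          (MvPolynomial.X p.1 - MvPolynomial.X p.2) + ((1 - κ : ℤ) : PP l n) := by
        push_cast; ring
      rw [harg]
      exact close_str κ (jhom_sub_tt p.1 p.2) (1 - κ) k'
    · intro i _
      refine Close.mul (Close.mul (Close.prod ?_) ?_) (Close.prod ?_)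
      · intro s _
        have harg : (MvPolynomial.X (τ i) - MvPolynomial.C (MvPolynomial.X s) - (κ : PP l n) :
            PP l n) = (MvPolynomial.X (τ i) - MvPolynomial.C (MvPolynomial.X s)) +
              ((-κ : ℤ) : PP l n) := by
          push_cast; ring
        rw [harg]
        exact close_str κ (jhom_sub_tz (τ i) s) (-κ) k
      · have harg : (MvPolynomial.X (τ i) - MvPolynomial.C (MvPolynomial.X (e i)) - (κ : PP l n) :
            PP l n) = (MvPolynomial.X (τ i) - MvPolynomial.C (MvPolynomial.X (e i))) +
              ((-κ : ℤ) : PP l n) := by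
          push_cast; ring
        rw [harg]
        exact close_str κ (jhom_sub_tz (τ i) (e i)) (-κ) (k - 1)
      · intro s _
        have h0 := close_str κ (jhom_sub_tz (τ i) s) 0 k
        rwa [show ((0 : ℤ) : PP l n) = 0 by push_cast; ring, add_zero] at h0
  rwa [deg_calc k k' hk hn1 τ e] at main

lemma U0_regroup (k k' : ℕ) (I : Finset (Fin n)) (hI : I.card = l) :
    U0 k k' l I = ∑ τ : Equiv.Perm (Fin l),
      U0tau k k' (fun i => ((I.orderIsoOfFin hI) i : Fin n)) τ := by
  rw [U0, dif_pos hI]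
  refine Finset.sum_congr rfl (fun τ _ => ?_)
  set e : Fin l → Fin n := fun i => ((I.orderIsoOfFin hI) i : Fin n) with he
  rw [U0tau]
  have hpair : (∏ p ∈ Finset.univ.filter (fun p : Fin l × Fin l => p.1 < p.2),
      (MvPolynomial.X p.1 - MvPolynomial.X p.2 : PP l n) ^ k') =
      (∏ p ∈ Finset.univ.filter (fun p : Fin l × Fin l => p.1 < p.2 ∧ τ p.1 < τ p.2),
        (MvPolynomial.X p.1 - MvPolynomial.X p.2) ^ k') *
      (∏ p ∈ Finset.univ.filter (fun p : Fin l × Fin l => p.1 < p.2 ∧ τ p.2 < τ p.1),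
        (MvPolynomial.X p.1 - MvPolynomial.X p.2) ^ k') := by
    rw [filter1_eq, filter2_eq,
      Finset.prod_filter_mul_prod_filter_not]
  have hin : ∀ i : Fin l, ((MvPolynomial.X (τ i) - MvPolynomial.C (MvPolynomial.X (e i)) :
      PP l n) ^ (k - 1) * ∏ a ∈ Finset.univ.erase (e i),
        (MvPolynomial.X (τ i) - MvPolynomial.C (MvPolynomial.X a)) ^ k) =
      ((∏ s ∈ Finset.univ.filter (fun s : Fin n => s < e i),
        (MvPolynomial.X (τ i) - MvPolynomial.C (MvPolynomial.X s)) ^ k) *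
      (MvPolynomial.X (τ i) - MvPolynomial.C (MvPolynomial.X (e i))) ^ (k - 1) *
      (∏ s ∈ Finset.univ.filter (fun s : Fin n => e i < s),
        (MvPolynomial.X (τ i) - MvPolynomial.C (MvPolynomial.X s)) ^ k)) := by
    intro i
    rw [← lt_gt_union (e i), Finset.prod_union (lt_gt_disjoint (e i))]
    ring
  rw [hpair, Finset.prod_congr rfl (fun i _ => hin i)]

lemma close_main (κ : ℤ) (k k' : ℕ) (hk : 1 ≤ k) (hn1 : 0 < n)
    (I : Finset (Fin n)) (hI : I.card = l) :
    Close (DD n l k k') (UU κ k k' I hI) (U0 k k' l I) := by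
  rw [UU, U0_regroup k k' I hI]
  exact Close.sum (fun τ _ => close_Utau κ k k' hk hn1 I hI τ)

lemma jhom_U0 (κ : ℤ) (k k' : ℕ) (hk : 1 ≤ k) (hn1 : 0 < n)
    (I : Finset (Fin n)) (hI : I.card = l) :
    Jhom (DD n l k k') (U0 k k' l I) := by
  rw [U0_regroup k k' I hI]
  set e : Fin l → Fin n := fun i => ((I.orderIsoOfFin hI) i : Fin n) with he
  refine Jhom.sum (fun τ _ => ?_)
  have main : Jhom (((∑ _p ∈ Finset.univ.filter
        (fun p : Fin l × Fin l => p.1 < p.2 ∧ τ p.1 < τ p.2), k') +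
      (∑ _p ∈ Finset.univ.filter
        (fun p : Fin l × Fin l => p.1 < p.2 ∧ τ p.2 < τ p.1), k')) +
      (∑ i : Fin l, ((∑ _s ∈ Finset.univ.filter (fun s : Fin n => s < e i), k) + (k - 1) +
        ∑ _s ∈ Finset.univ.filter (fun s : Fin n => e i < s), k)))
      (U0tau k k' e τ) := by
    rw [U0tau]
    refine Jhom.mul (Jhom.mul (Jhom.prod ?_) (Jhom.prod ?_)) (Jhom.prod ?_)
    · intro p _
      simpa using (jhom_sub_tt (n := n) p.1 p.2).pow k'
    · intro p _
      simpa using (jhom_sub_tt (n := n) p.1 p.2).pow k'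
    · intro i _
      refine Jhom.mul (Jhom.mul (Jhom.prod ?_) ?_) (Jhom.prod ?_)
      · intro s _
        simpa using (jhom_sub_tz (τ i) s).pow k
      · simpa using (jhom_sub_tz (τ i) (e i)).pow (k - 1)
      · intro s _
        simpa using (jhom_sub_tz (τ i) s).pow k
  rwa [deg_calc k k' hk hn1 τ e] at main

end Structural2

section Triangular

open Finset MvPolynomial

variable {σ : Type*} [Fintype σ] [DecidableEq σ]

lemma degreeOf_X_pow_le (j i : σ) (c : ℕ) :
    MvPolynomial.degreeOf j ((MvPolynomial.X i : MvPolynomial σ ℤ) ^ c) ≤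
      if j = i then c else 0 := by
  refine le_trans (MvPolynomial.degreeOf_pow_le j _ c) ?_
  have hX := MvPolynomial.degreeOf_X (R := ℤ) j i
  rw [hX]
  split_ifs <;> simp

/-- `str κ c (X i) = X i ^ c + E` with `E` of low degree in `X i`. -/
lemma str_X_decomp (κ : ℤ) (i : σ) (c : ℕ) :
    ∃ E : MvPolynomial σ ℤ, str κ c (MvPolynomial.X i) = MvPolynomial.X i ^ c + E ∧
      (∀ j, MvPolynomial.degreeOf j E ≤ if j = i then c else 0) ∧
      (∀ μ : σ →₀ ℕ, c ≤ μ i → MvPolynomial.coeff μ E = 0) := by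
  induction c with
  | zero =>
    refine ⟨0, by simp [str], fun j => by simp, fun μ _ => by simp⟩
  | succ c ih =>
    obtain ⟨E, hE, hdeg, hco⟩ := ih
    set a : ℤ := (c : ℤ) * κ with ha
    refine ⟨E * MvPolynomial.X i + MvPolynomial.C (-a) * MvPolynomial.X i ^ c +
      MvPolynomial.C (-a) * E, ?_, ?_, ?_⟩
    · rw [str, Finset.prod_range_succ, ← str, hE]
      rw [show ((((c : ℤ) * κ : ℤ)) : MvPolynomial σ ℤ) = MvPolynomial.C a from by rw [ha]; rfl,
        map_neg]
      ring
    · intro j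
      refine le_trans (MvPolynomial.degreeOf_add_le _ _ _) ?_
      refine max_le (le_trans (MvPolynomial.degreeOf_add_le _ _ _) (max_le ?_ ?_)) ?_
      · refine le_trans (MvPolynomial.degreeOf_mul_le _ _ _) ?_
        have h1 := hdeg j
        have hX := MvPolynomial.degreeOf_X (R := ℤ) j i
        split_ifs at * with h <;> omega
      · refine le_trans (MvPolynomial.degreeOf_mul_le _ _ _) ?_
        have h1 := degreeOf_X_pow_le j i c
        have h2 := MvPolynomial.degreeOf_C (-a) j
        split_ifs at * with h <;> omega
      · refine le_trans (MvPolynomial.degreeOf_mul_le _ _ _) ?_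
        have h1 := hdeg j
        have h2 := MvPolynomial.degreeOf_C (-a) j
        split_ifs at * with h <;> omega
    · intro μ hμ
      rw [MvPolynomial.coeff_add, MvPolynomial.coeff_add]
      have h1 : MvPolynomial.coeff μ (E * MvPolynomial.X i) = 0 := by
        rw [MvPolynomial.coeff_mul_X']
        split_ifs with h
        · apply hco
          rw [Finsupp.tsub_apply, Finsupp.single_eq_same]
          omega
        · rfl
      have h2 : MvPolynomial.coeff μ (MvPolynomial.C (-a) * MvPolynomial.X i ^ c) = 0 := by
        rw [MvPolynomial.coeff_C_mul, MvPolynomial.X_pow_eq_monomial,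
          MvPolynomial.coeff_monomial]
        split_ifs with h
        · subst h
          simp [Finsupp.single_eq_same] at hμ
        · ring
      have h3 : MvPolynomial.coeff μ (MvPolynomial.C (-a) * E) = 0 := by
        rw [MvPolynomial.coeff_C_mul, hco μ (by omega)]
        ring
      rw [h1, h2, h3]
      ring

/-- the ℤ-coefficients string product -/
noncomputable def q0 (κ : ℤ) {l : ℕ} (m : Fin l → ℕ) : MvPolynomial (Fin l) ℤ :=
  ∏ i : Fin l, str κ (m i) (MvPolynomial.X i)

lemma degreeOf_q0_le (κ : ℤ) {l : ℕ} (m : Fin l → ℕ) (j : Fin l) :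
    MvPolynomial.degreeOf j (q0 κ m) ≤ m j := by
  have h0 := MvPolynomial.degreeOf_prod_le (R := ℤ) j Finset.univ
    (fun i : Fin l => str κ (m i) (MvPolynomial.X i))
  rw [q0]
  refine le_trans h0 ?_
  have h : ∀ i : Fin l, MvPolynomial.degreeOf j
      (str κ (m i) (MvPolynomial.X i : MvPolynomial (Fin l) ℤ)) ≤
      if j = i then m i else 0 := by
    intro i
    obtain ⟨E, hE, hdeg, -⟩ := str_X_decomp κ i (m i)
    rw [hE]
    refine le_trans (MvPolynomial.degreeOf_add_le _ _ _) (max_le (degreeOf_X_pow_le j i (m i))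
      (hdeg j))
  refine le_trans (Finset.sum_le_sum fun i _ => h i) ?_
  rw [Finset.sum_ite_eq Finset.univ j m]
  simp

lemma coeff_q0_eq_zero (κ : ℤ) {l : ℕ} (m : Fin l → ℕ) (μ : Fin l →₀ ℕ) (j : Fin l)
    (h : m j < μ j) : MvPolynomial.coeff μ (q0 κ m) = 0 := by
  by_contra hc
  have := MvPolynomial.monomial_le_degreeOf j (MvPolynomial.mem_support_iff.2 hc)
  have := degreeOf_q0_le κ m j
  omega

lemma coeff_mul_eq_zero_right (p q : MvPolynomial σ ℤ) (i0 : σ) (c : ℕ) (ν : σ →₀ ℕ)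
    (hp : ∀ μ : σ →₀ ℕ, c ≤ μ i0 → MvPolynomial.coeff μ p = 0)
    (hq : MvPolynomial.degreeOf i0 q = 0) (hν : c ≤ ν i0) :
    MvPolynomial.coeff ν (p * q) = 0 := by
  rw [MvPolynomial.coeff_mul]
  refine Finset.sum_eq_zero fun x hx => ?_
  by_cases h2 : MvPolynomial.coeff x.2 q = 0
  · rw [h2, mul_zero]
  · have hb : x.2 i0 = 0 := by
      have := MvPolynomial.monomial_le_degreeOf i0 (MvPolynomial.mem_support_iff.2 h2)
      omega
    have hsum : x.1 + x.2 = ν := Finset.HasAntidiagonal.mem_antidiagonal.1 hx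
    have : x.1 i0 = ν i0 := by
      have := congrArg (fun f => f i0) hsum
      simpa [Finsupp.add_apply, hb] using this
    rw [hp x.1 (by omega), zero_mul]

lemma coeff_q0_self (κ : ℤ) {l : ℕ} (m : Fin l → ℕ) :
    MvPolynomial.coeff (Finsupp.equivFunOnFinite.symm m) (q0 κ m) = 1 := by
  classical
  set ν : Fin l →₀ ℕ := Finsupp.equivFunOnFinite.symm m with hν
  have hνa : ∀ i, ν i = m i := fun i => rfl
  choose E hE hdeg hco using fun i : Fin l => str_X_decomp κ i (m i)
  have hq0 : q0 κ m = ∑ t ∈ Finset.univ.powerset,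
      (∏ i ∈ t, MvPolynomial.X i ^ m i) * ∏ i ∈ Finset.univ \ t, E i := by
    rw [q0]
    rw [Finset.prod_congr rfl (fun i _ => hE i)]
    exact Finset.prod_add _ _ _
  rw [hq0, MvPolynomial.coeff_sum]
  have hmain : ∀ t ∈ Finset.univ.powerset, t ≠ Finset.univ →
      MvPolynomial.coeff ν ((∏ i ∈ t, MvPolynomial.X i ^ m i) * ∏ i ∈ Finset.univ \ t, E i)
        = 0 := by
    intro t ht hne
    obtain ⟨i0, hi0u, hi0t⟩ : ∃ i0, i0 ∈ Finset.univ ∧ i0 ∉ t := by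
      by_contra hfull
      push_neg at hfull
      exact hne (Finset.eq_univ_iff_forall.2 fun i => hfull i (Finset.mem_univ i))
    have hi0d : i0 ∈ Finset.univ \ t := Finset.mem_sdiff.2 ⟨hi0u, hi0t⟩
    rw [← Finset.mul_prod_erase _ _ hi0d]
    have hassoc : (∏ i ∈ t, MvPolynomial.X i ^ m i) *
        (E i0 * ∏ i ∈ (Finset.univ \ t).erase i0, E i) =
        E i0 * ((∏ i ∈ t, MvPolynomial.X i ^ m i) *
          ∏ i ∈ (Finset.univ \ t).erase i0, E i) := by ring
    rw [hassoc]
    have hq : MvPolynomial.degreeOf i0 ((∏ i ∈ t,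
        (MvPolynomial.X i ^ m i : MvPolynomial (Fin l) ℤ)) *
        ∏ i ∈ (Finset.univ \ t).erase i0, E i) = 0 := by
      refine Nat.eq_zero_of_le_zero (le_trans (MvPolynomial.degreeOf_mul_le (R := ℤ) i0
        (∏ i ∈ t, MvPolynomial.X i ^ m i) (∏ i ∈ (Finset.univ \ t).erase i0, E i)) ?_)
      have h1 : MvPolynomial.degreeOf i0 (∏ i ∈ t,
          (MvPolynomial.X i ^ m i : MvPolynomial (Fin l) ℤ)) = 0 := by
        refine Nat.eq_zero_of_le_zero (le_trans (MvPolynomial.degreeOf_prod_le (R := ℤ) i0 t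
          (fun i : Fin l => MvPolynomial.X i ^ m i)) ?_)
        refine le_of_eq (Finset.sum_eq_zero fun i hi => ?_)
        have := degreeOf_X_pow_le (σ := Fin l) i0 i (m i)
        rw [if_neg (show ¬ i0 = i from fun h => hi0t (by rw [h]; exact hi))] at this
        omega
      have h2 : MvPolynomial.degreeOf i0 (∏ i ∈ (Finset.univ \ t).erase i0, E i) = 0 := by
        refine Nat.eq_zero_of_le_zero (le_trans (MvPolynomial.degreeOf_prod_le (R := ℤ) i0
          ((Finset.univ \ t).erase i0) E) ?_)
        refine le_of_eq (Finset.sum_eq_zero fun i hi => ?_)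
        have := hdeg i i0
        rw [if_neg (fun h => Finset.ne_of_mem_erase hi h.symm)] at this
        omega
      omega
    exact coeff_mul_eq_zero_right (E i0) _ i0 (m i0) ν (fun μ hμ => hco i0 μ hμ) hq le_rfl
  rw [Finset.sum_eq_single Finset.univ hmain (fun h => absurd (Finset.mem_powerset_self _) h),
    Finset.sdiff_self, Finset.prod_empty, mul_one]
  have hXprod : (∏ i ∈ Finset.univ, MvPolynomial.X i ^ m i : MvPolynomial (Fin l) ℤ) =
      ∏ i ∈ ν.support, MvPolynomial.X i ^ ν i := by
    refine (Finset.prod_subset (Finset.subset_univ _) fun i _ hi => ?_).symm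
    rw [show m i = ν i from rfl, Finsupp.notMem_support_iff.1 hi, pow_zero]
  rw [hXprod, MvPolynomial.prod_X_pow_eq_monomial, MvPolynomial.coeff_monomial, if_pos rfl]

end Triangular

/-- `f^0_{r,I}(z) = c^0_{I,r}(z)`: the coefficient of `t^r` in `U^0_I`. -/
noncomputable def f0KZ (k k' : ℕ) {n : ℕ} (l : ℕ) (r : Fin l → ℕ) (I : Finset (Fin n)) :
    MvPolynomial (Fin n) ℤ :=
  MvPolynomial.coeff (Finsupp.equivFunOnFinite.symm r) (U0 k k' l I)

section Inversion

open Finset MvPolynomial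

variable {n l : ℕ}

lemma wt_symm (g : Fin l → ℕ) : wt (Finsupp.equivFunOnFinite.symm g) = ∑ i, g i := by
  rw [wt, Finsupp.sum_fintype]
  · rfl
  · intro i; rfl

lemma map_q0 (κ : ℤ) (m : Fin l → ℕ) :
    MvPolynomial.map (MvPolynomial.C : ℤ →+* MvPolynomial (Fin n) ℤ) (q0 κ m) =
      ∏ i : Fin l, str κ (m i) (MvPolynomial.X i : PP l n) := by
  rw [q0, map_prod]
  refine Finset.prod_congr rfl fun i _ => ?_
  rw [str, str, map_prod]
  refine Finset.prod_congr rfl fun j _ => ?_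
  rw [map_sub, MvPolynomial.map_X, map_intCast]

lemma coeff_UU_expand (κ : ℤ) (k k' d : ℕ) (I : Finset (Fin n)) (hI : I.card = l)
    (c : Finset (Fin n) → (Fin l → ℕ) → MvPolynomial (Fin n) ℤ)
    (hexpI : UU κ k k' I hI =
      ∑ m ∈ Fintype.piFinset (fun _ : Fin l => Finset.range (d + 1)),
        MvPolynomial.C (c I m) * ∏ i, str κ (m i) (MvPolynomial.X i)) :
    ∀ a : Fin l → ℕ,
      MvPolynomial.coeff (Finsupp.equivFunOnFinite.symm a) (UU κ k k' I hI) =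
      ∑ m' ∈ Fintype.piFinset (fun _ : Fin l => Finset.range (d + 1)),
        c I m' * MvPolynomial.C
          (MvPolynomial.coeff (Finsupp.equivFunOnFinite.symm a) (q0 κ m')) := by
  intro a
  rw [hexpI, MvPolynomial.coeff_sum]
  refine Finset.sum_congr rfl fun m' _ => ?_
  rw [← map_q0, MvPolynomial.coeff_C_mul, MvPolynomial.coeff_map]

lemma key_bound (κ : ℤ) (k k' d : ℕ) (I : Finset (Fin n)) (hI : I.card = l)
    (c : Finset (Fin n) → (Fin l → ℕ) → MvPolynomial (Fin n) ℤ)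
    (hexpI : UU κ k k' I hI =
      ∑ m ∈ Fintype.piFinset (fun _ : Fin l => Finset.range (d + 1)),
        MvPolynomial.C (c I m) * ∏ i, str κ (m i) (MvPolynomial.X i))
    (hUle : Jle (DD n l k k') (UU κ k k' I hI)) :
    ∀ (Mb : ℕ) (m : Fin l → ℕ), (∀ i, m i ≤ d) → l * d + 1 - (∑ i, m i) ≤ Mb →
      ∀ μ ∈ (c I m).support, wt μ + (∑ i, m i) ≤ DD n l k k' := by
  have hcoeff := coeff_UU_expand κ k k' d I hI c hexpI
  intro Mb
  induction Mb with
  | zero =>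
    intro m hm hMb μ hμ
    exfalso
    have hsum : ∑ i, m i ≤ l * d := by
      calc ∑ i, m i ≤ ∑ _i : Fin l, d := Finset.sum_le_sum fun i _ => hm i
      _ = l * d := by rw [Finset.sum_const, smul_eq_mul, Finset.card_univ, Fintype.card_fin]
    omega
  | succ Mb ih =>
    intro m hm hMb μ hμ
    have hmBox : m ∈ Fintype.piFinset (fun _ : Fin l => Finset.range (d + 1)) :=
      Fintype.mem_piFinset.2 fun i => Finset.mem_range.2 (by have := hm i; omega)
    have h1 := hcoeff m
    rw [← Finset.add_sum_erase _ _ hmBox, coeff_q0_self, map_one, mul_one] at h1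
    have heq : c I m =
        MvPolynomial.coeff (Finsupp.equivFunOnFinite.symm m) (UU κ k k' I hI) -
        ∑ m' ∈ (Fintype.piFinset (fun _ : Fin l => Finset.range (d + 1))).erase m,
          c I m' * MvPolynomial.C
            (MvPolynomial.coeff (Finsupp.equivFunOnFinite.symm m) (q0 κ m')) :=
      eq_sub_of_add_eq h1.symm
    have hco : MvPolynomial.coeff μ (c I m) ≠ 0 := MvPolynomial.mem_support_iff.1 hμ
    rw [heq, MvPolynomial.coeff_sub, MvPolynomial.coeff_sum] at hco
    have hcases : MvPolynomial.coeff μ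
        (MvPolynomial.coeff (Finsupp.equivFunOnFinite.symm m) (UU κ k k' I hI)) ≠ 0 ∨
        ∃ m' ∈ (Fintype.piFinset (fun _ : Fin l => Finset.range (d + 1))).erase m,
          MvPolynomial.coeff μ (c I m' * MvPolynomial.C
            (MvPolynomial.coeff (Finsupp.equivFunOnFinite.symm m) (q0 κ m'))) ≠ 0 := by
      by_contra hcon
      push_neg at hcon
      obtain ⟨hA, hB⟩ := hcon
      rw [hA, Finset.sum_eq_zero hB, sub_zero] at hco
      exact hco rfl
    rcases hcases with hA | ⟨m', hm'mem, hne0⟩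
    · have := hUle (Finsupp.equivFunOnFinite.symm m) μ (MvPolynomial.mem_support_iff.2 hA)
      rw [wt_symm] at this
      omega
    · have hm'Box := Finset.mem_of_mem_erase hm'mem
      have hm'ne : m' ≠ m := Finset.ne_of_mem_erase hm'mem
      have hm'le : ∀ i, m' i ≤ d := fun i => by
        have := Fintype.mem_piFinset.1 hm'Box i
        rw [Finset.mem_range] at this
        omega
      rw [mul_comm, MvPolynomial.coeff_C_mul] at hne0
      have hcne : MvPolynomial.coeff μ (c I m') ≠ 0 := fun h => hne0 (by rw [h, mul_zero])
      have htne : MvPolynomial.coeff (Finsupp.equivFunOnFinite.symm m) (q0 κ m') ≠ 0 :=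
        fun h => hne0 (by rw [h, zero_mul])
      have hle : ∀ j, m j ≤ m' j := by
        intro j
        by_contra hgt
        push_neg at hgt
        exact htne (coeff_q0_eq_zero κ m' _ j (by
          show m' j < (Finsupp.equivFunOnFinite.symm m) j
          exact hgt))
      have hlt : ∑ i, m i < ∑ i, m' i := by
        obtain ⟨j, hj⟩ := Function.ne_iff.1 (fun h => hm'ne (funext fun i => (congrFun h i).symm))
      -- hj : m j ≠ m' j  (careful with direction)
        refine Finset.sum_lt_sum (fun i _ => hle i) ⟨j, Finset.mem_univ j, ?_⟩
        exact lt_of_le_of_ne (hle j) hj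
      have := ih m' hm'le (by omega) μ (MvPolynomial.mem_support_iff.2 hcne)
      omega

end Inversion

/-- for coprime `0 < κ < N`, `0 < k,k' < N` with `κk ≡ −1`, `κk' ≡ 2 (mod N)`,
`n > 1`, `1 ≤ l`, `2l ≤ n`, and positive `r_i ≡ −1 (mod N)` (so `N_r = 1`), set
`d_r = nlk + l(l−1)k'/2 − l − Σr_i`.  Then for every `l`-subset `I`, the polynomial
`f^0_{r,I}` is homogeneous of degree `d_r` (or zero), and every monomial of
`f_{r,I} − f^0_{r,I}` has total degree `< d_r`; i.e. `f_{r,I} = f^0_{r,I} + (lower order)`.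
Here `f_{r,I}(z) = c_{I,r}(z)` is the string-basis coefficient of the qKZ integrand. -/
theorem stmt2 (κ N : ℤ) (hκ : 0 < κ) (hκN : κ < N) (hcop : Int.gcd κ N = 1)
    (k k' : ℕ) (hk0 : 0 < k) (hkN : (k : ℤ) < N) (hkC : N ∣ κ * k + 1)
    (hk'0 : 0 < k') (hk'N : (k' : ℤ) < N) (hk'C : N ∣ κ * k' - 2)
    (n l : ℕ) (hn : 1 < n) (hl : 1 ≤ l) (hln : 2 * l ≤ n)
    (r : Fin l → ℕ) (hr : ∀ i, 0 < r i) (hrm : ∀ i, N ∣ (r i : ℤ) + 1)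
    (d : ℕ) (c : Finset (Fin n) → (Fin l → ℕ) → MvPolynomial (Fin n) ℤ)
    (hc0 : ∀ (I : Finset (Fin n)) (m : Fin l → ℕ), (∃ i, d < m i) → c I m = 0)
    (hexp : ∀ (I : Finset (Fin n)) (hI : I.card = l),
      UU κ k k' I hI = ∑ m ∈ Fintype.piFinset (fun _ : Fin l => Finset.range (d + 1)),
        MvPolynomial.C (c I m) * ∏ i, str κ (m i) (MvPolynomial.X i)) :
    ∀ (I : Finset (Fin n)), I.card = l →
      (∀ m ∈ (f0KZ k k' l r I).support,
        ((m.sum fun _ e => e : ℕ) : ℤ) =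
          (n : ℤ) * l * k + ((l * (l - 1) / 2 : ℕ) : ℤ) * k' - l - ∑ i, (r i : ℤ)) ∧
      (∀ m ∈ (c I r - f0KZ k k' l r I).support,
        ((m.sum fun _ e => e : ℕ) : ℤ) <
          (n : ℤ) * l * k + ((l * (l - 1) / 2 : ℕ) : ℤ) * k' - l - ∑ i, (r i : ℤ)) := by
  intro I hI
  have hn0 : 0 < n := by omega
  obtain ⟨hUle, hU0le, hUlt⟩ := close_main κ k k' hk0 hn0 I hI
  have hhom := jhom_U0 κ k k' hk0 hn0 I hI
  have hkey := key_bound κ k k' d I hI c (hexp I hI) hUle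
  have hnk : 1 ≤ n * k := Nat.mul_pos hn0 hk0
  have hD : ((DD n l k k' : ℕ) : ℤ) =
      (n : ℤ) * l * k + ((l * (l - 1) / 2 : ℕ) : ℤ) * k' - l := by
    rw [DD]
    push_cast [Nat.cast_sub hnk]
    ring
  have hrsum : wt (Finsupp.equivFunOnFinite.symm r) = ∑ i, r i := wt_symm r
  have hrsumZ : ((∑ i, r i : ℕ) : ℤ) = ∑ i, (r i : ℤ) := by push_cast; rfl
  constructor
  · -- homogeneity of f0KZ
    intro m hm
    have h := hhom (Finsupp.equivFunOnFinite.symm r) m hm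
    have h2 : ((wt m : ℕ) : ℤ) + ∑ i, (r i : ℤ) = ((DD n l k k' : ℕ) : ℤ) := by
      rw [← hrsumZ]
      exact_mod_cast (by omega : wt m + ∑ i, r i = DD n l k k')
    show ((wt m : ℕ) : ℤ) = _
    rw [hD] at h2
    linarith
  · -- lower order terms
    intro m hm
    have hsplit : c I r - f0KZ k k' l r I =
        (c I r - MvPolynomial.coeff (Finsupp.equivFunOnFinite.symm r) (UU κ k k' I hI)) +
        MvPolynomial.coeff (Finsupp.equivFunOnFinite.symm r)
          (UU κ k k' I hI - U0 k k' l I) := by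
      rw [MvPolynomial.coeff_sub]
      show c I r - MvPolynomial.coeff (Finsupp.equivFunOnFinite.symm r) (U0 k k' l I) = _
      ring
    have hmne : MvPolynomial.coeff m (c I r - f0KZ k k' l r I) ≠ 0 :=
      MvPolynomial.mem_support_iff.1 hm
    rw [hsplit, MvPolynomial.coeff_add] at hmne
    have hcases : MvPolynomial.coeff m (c I r -
        MvPolynomial.coeff (Finsupp.equivFunOnFinite.symm r) (UU κ k k' I hI)) ≠ 0 ∨
        MvPolynomial.coeff m (MvPolynomial.coeff (Finsupp.equivFunOnFinite.symm r)
          (UU κ k k' I hI - U0 k k' l I)) ≠ 0 := by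
      by_contra hcon
      push_neg at hcon
      rw [hcon.1, hcon.2, add_zero] at hmne
      exact hmne rfl
    have hgoal : wt m + ∑ i, r i < DD n l k k' := by
      rcases hcases with hA | hB
      · -- inversion part
        have hcoeff := coeff_UU_expand κ k k' d I hI c (hexp I hI)
        by_cases hrB : ∀ i, r i ≤ d
        · -- r in the box
          have hrBox : r ∈ Fintype.piFinset (fun _ : Fin l => Finset.range (d + 1)) :=
            Fintype.mem_piFinset.2 fun i => Finset.mem_range.2 (by have := hrB i; omega)
          have h1 := hcoeff r
          rw [← Finset.add_sum_erase _ _ hrBox, coeff_q0_self, map_one, mul_one] at h1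
          have heq : c I r - MvPolynomial.coeff (Finsupp.equivFunOnFinite.symm r)
              (UU κ k k' I hI) =
              - ∑ m' ∈ (Fintype.piFinset (fun _ : Fin l => Finset.range (d + 1))).erase r,
                c I m' * MvPolynomial.C
                  (MvPolynomial.coeff (Finsupp.equivFunOnFinite.symm r) (q0 κ m')) := by
            rw [h1]; ring
          rw [heq, MvPolynomial.coeff_neg, MvPolynomial.coeff_sum, neg_ne_zero] at hA
          obtain ⟨m', hm'mem, hne0⟩ := Finset.exists_ne_zero_of_sum_ne_zero hA
          have hm'Box := Finset.mem_of_mem_erase hm'mem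
          have hm'ne : m' ≠ r := Finset.ne_of_mem_erase hm'mem
          have hm'le : ∀ i, m' i ≤ d := fun i => by
            have := Fintype.mem_piFinset.1 hm'Box i
            rw [Finset.mem_range] at this
            omega
          rw [mul_comm, MvPolynomial.coeff_C_mul] at hne0
          have hcne : MvPolynomial.coeff m (c I m') ≠ 0 :=
            fun h => hne0 (by rw [h, mul_zero])
          have htne : MvPolynomial.coeff (Finsupp.equivFunOnFinite.symm r) (q0 κ m') ≠ 0 :=
            fun h => hne0 (by rw [h, zero_mul])
          have hle : ∀ j, r j ≤ m' j := by
            intro j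
            by_contra hgt
            push_neg at hgt
            exact htne (coeff_q0_eq_zero κ m' _ j (by
              show m' j < (Finsupp.equivFunOnFinite.symm r) j
              exact hgt))
          have hlt : ∑ i, r i < ∑ i, m' i := by
            obtain ⟨j, hj⟩ := Function.ne_iff.1
              (fun h => hm'ne (funext fun i => (congrFun h i)))
            refine Finset.sum_lt_sum (fun i _ => hle i) ⟨j, Finset.mem_univ j, ?_⟩
            exact lt_of_le_of_ne (hle j) (fun h => hj h.symm)
          have := hkey (l * d + 1) m' hm'le (by omega) m
            (MvPolynomial.mem_support_iff.2 hcne)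
          omega
        · -- r outside the box : both terms vanish
          exfalso
          push_neg at hrB
          obtain ⟨j, hj⟩ := hrB
          have hc0r : c I r = 0 := hc0 I r ⟨j, hj⟩
          have hzero : MvPolynomial.coeff (Finsupp.equivFunOnFinite.symm r)
              (UU κ k k' I hI) = 0 := by
            rw [hcoeff r]
            refine Finset.sum_eq_zero fun m' hm' => ?_
            have hm'le : m' j ≤ d := by
              have := Fintype.mem_piFinset.1 hm' j
              rw [Finset.mem_range] at this
              omega
            rw [coeff_q0_eq_zero κ m' _ j (by
              show m' j < (Finsupp.equivFunOnFinite.symm r) j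
              show m' j < r j
              omega), map_zero, mul_zero]
          rw [hc0r, hzero, sub_zero] at hA
          simp at hA
      · -- difference part
        have := hUlt (Finsupp.equivFunOnFinite.symm r) m (MvPolynomial.mem_support_iff.2 hB)
        omega
    have h2 : ((wt m : ℕ) : ℤ) + ∑ i, (r i : ℤ) < ((DD n l k k' : ℕ) : ℤ) := by
      rw [← hrsumZ]
      exact_mod_cast (by omega : wt m + ∑ i, r i < DD n l k k')
    show ((wt m : ℕ) : ℤ) < _
    rw [hD] at h2
    linarith
end Close
end

section
/- Let κ, N be relatively prime integers with 0 < κ < N, let l ≥ 1 and r = (r_1,…,r_l) be a sequence of nonnegative integers, and let f ∈ ℤ[z_1,…,z_n][t_1,…,t_l]. Then for every j = 1,…,l, the difference r-integral of the discrete t_j-differential of f vanishes modulo N: {D_{t_j} f}^{t_1,…,t_l}_r ≡ 0 (mod N), i.e. every coefficient of the polynomial N_r · (coefficient of ∏_{i=1}^{l}[t_i]_{r_i} in the string expansion of f(t) − f(t_1,…,t_j−κ,…,t_l)) is divisible by N. -/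
open Finset

private def SS (κ : ℤ) (m : ℕ) (s : ℤ) (p : ℕ) : ℤ :=
  ∑ b ∈ Finset.range (m+1), (-1)^b * (m.choose b) * (s + b*κ)^p

private lemma SS_dvd (κ : ℤ) : ∀ (p m : ℕ) (s : ℤ), ((m.factorial : ℤ) * κ^m) ∣ SS κ m s p := by
  intro p
  induction p with
  | zero =>
    intro m s
    simp only [SS, pow_zero, mul_one]
    rcases Nat.eq_zero_or_pos m with hm | hm
    · subst hm; simp
    · rw [Int.alternating_sum_range_choose_of_ne (Nat.pos_iff_ne_zero.mp hm)]
      exact dvd_zero _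
  | succ p ih =>
    intro m s
    have h1 : SS κ m s (p+1) = s * SS κ m s p
        + κ * ∑ b ∈ Finset.range (m+1), (b:ℤ) * ((-1)^b * (m.choose b) * (s + b*κ)^p) := by
      simp only [SS, Finset.mul_sum, ← Finset.sum_add_distrib]
      apply Finset.sum_congr rfl
      intro b _
      ring
    rcases m with _ | m'
    · simp
    · have h2 : ∑ b ∈ Finset.range (m'+1+1), (b:ℤ) * ((-1)^b * ((m'+1).choose b) * (s + b*κ)^p)
          = -(((m':ℤ)+1) * SS κ m' (s+κ) p) := by
        rw [Finset.sum_range_succ']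
        simp only [Nat.cast_zero, zero_mul, add_zero]
        rw [SS, Finset.mul_sum, ← Finset.sum_neg_distrib]
        apply Finset.sum_congr rfl
        intro b _
        have hch : ((m'+1 : ℕ) : ℤ) * ((m'.choose b : ℕ) : ℤ)
            = (((m'+1).choose (b+1) : ℕ) : ℤ) * ((b+1 : ℕ) : ℤ) := by
          exact_mod_cast congrArg (Nat.cast : ℕ → ℤ) (Nat.add_one_mul_choose_eq m' b)
        push_cast at hch ⊢
        have hx : s + ((b:ℤ)+1)*κ = (s+κ) + (b:ℤ)*κ := by ring
        rw [hx, pow_succ (-1:ℤ) b]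
        linear_combination ((-1:ℤ))^b * ((s+κ+(b:ℤ)*κ)^p) * hch
      rw [h1, h2]
      have hd1 : ((((m'+1).factorial : ℕ) : ℤ) * κ^(m'+1)) ∣ s * SS κ (m'+1) s p :=
        Dvd.dvd.mul_left (ih (m'+1) s) s
      have hd2 : ((((m'+1).factorial : ℕ) : ℤ) * κ^(m'+1)) ∣ κ * -(((m':ℤ)+1) * SS κ m' (s+κ) p) := by
        obtain ⟨t, ht⟩ := ih m' (s+κ)
        refine ⟨-t, ?_⟩
        rw [Nat.factorial_succ]
        push_cast
        rw [ht]
        ring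
      exact dvd_add hd1 hd2

private lemma SS_pascal (κ : ℤ) (r p : ℕ) (s : ℤ) :
    SS κ (r+1) s p - SS κ r s p = - SS κ r (s+κ) p := by
  have h0 : SS κ r s p = ∑ b ∈ Finset.range (r+1+1), (-1:ℤ)^b * (r.choose b) * (s + b*κ)^p := by
    rw [Finset.sum_range_succ, Nat.choose_eq_zero_of_lt (Nat.lt_succ_self r)]
    simp [SS]
  rw [show SS κ (r+1) s p = ∑ b ∈ Finset.range (r+1+1),
      (-1:ℤ)^b * ((r+1).choose b) * (s + b*κ)^p from rfl, h0, ← Finset.sum_sub_distrib,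
    Finset.sum_range_succ']
  have h1 : ∀ b ∈ Finset.range (r+1),
      ((-1:ℤ)^(b+1) * ((r+1).choose (b+1)) * (s + (b+1:ℕ)*κ)^p
        - (-1:ℤ)^(b+1) * (r.choose (b+1)) * (s + (b+1:ℕ)*κ)^p)
      = -((-1:ℤ)^b * (r.choose b) * ((s+κ) + b*κ)^p) := by
    intro b _
    have hch : (((r+1).choose (b+1) : ℕ) : ℤ) = (r.choose b : ℕ) + (r.choose (b+1) : ℕ) := by
      exact_mod_cast congrArg (Nat.cast : ℕ → ℤ) (Nat.choose_succ_succ r b)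
    have hx : s + ((b:ℤ)+1)*κ = (s+κ) + (b:ℤ)*κ := by ring
    push_cast
    rw [hx, pow_succ (-1:ℤ) b]
    linear_combination (-((-1:ℤ)^b * ((s+κ)+(b:ℤ)*κ)^p)) * hch
  rw [Finset.sum_congr rfl h1]
  simp [SS, Finset.sum_neg_distrib]

private lemma str_nat_mul (κ : ℤ) (a : ℕ) : ∀ m : ℕ,
    str (R := ℤ) κ m ((a:ℤ) * κ) = (a.descFactorial m : ℤ) * κ^m := by
  intro m
  induction m with
  | zero => simp [str]
  | succ m ih =>
    rw [str, Finset.prod_range_succ, ← str, ih]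
    by_cases h : m ≤ a
    · rw [Nat.descFactorial_succ]
      push_cast [Nat.cast_sub h]
      ring
    · push_neg at h
      rw [Nat.descFactorial_eq_zero_iff_lt.2 h,
        Nat.descFactorial_eq_zero_iff_lt.2 (Nat.lt_succ_of_lt h)]
      simp

private lemma orth (κ : ℤ) (r m : ℕ) :
    ∑ a ∈ Finset.range (r+1), (-1:ℤ)^a * (r.choose a) * str (R := ℤ) κ m ((a:ℤ)*κ)
      = if m = r then (-1)^r * ((r.factorial : ℤ) * κ^r) else 0 := by
  have key : ∑ a ∈ Finset.range (r+1), (-1:ℤ)^a * (r.choose a) * (a.choose m)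
      = if m = r then (-1:ℤ)^r else 0 := by
    rcases lt_or_ge r m with h | h
    · rw [if_neg (by omega)]
      apply Finset.sum_eq_zero
      intro a ha
      rw [Nat.choose_eq_zero_of_lt (lt_of_le_of_lt (Finset.mem_range_succ_iff.mp ha) h)]
      simp
    · rw [Finset.range_eq_Ico, ← Finset.sum_Ico_consecutive _ (Nat.zero_le m) (by omega : m ≤ r+1)]
      have h1 : ∑ a ∈ Finset.Ico 0 m, (-1:ℤ)^a * (r.choose a) * (a.choose m) = 0 := by
        apply Finset.sum_eq_zero
        intro a ha
        rw [Nat.choose_eq_zero_of_lt (Finset.mem_Ico.mp ha).2]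
        simp
      rw [h1, zero_add, Finset.sum_Ico_eq_sum_range]
      have h2 : r + 1 - m = (r - m) + 1 := by omega
      rw [h2]
      have h3 : ∀ i ∈ Finset.range ((r-m)+1),
          (-1:ℤ)^(m+i) * (r.choose (m+i)) * ((m+i).choose m)
          = ((r.choose m : ℤ) * (-1)^m) * ((-1)^i * ((r-m).choose i)) := by
        intro i hi
        have hle : m + i ≤ r := by
          have := Finset.mem_range.mp hi; omega
        have hc := Nat.choose_mul (n := r) (k := m+i) (s := m) (Nat.le_add_right m i)
        have hc' : ((r.choose (m+i) : ℕ):ℤ) * ((m+i).choose m : ℕ)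
            = ((r.choose m : ℕ):ℤ) * (((r-m).choose ((m+i)-m) : ℕ):ℤ) := by
          exact_mod_cast congrArg (Nat.cast : ℕ → ℤ) hc
        rw [Nat.add_sub_cancel_left] at hc'
        rw [pow_add]
        linear_combination ((-1:ℤ)^m * (-1:ℤ)^i) * hc'
      rw [Finset.sum_congr rfl h3, ← Finset.mul_sum, Int.alternating_sum_range_choose]
      by_cases hm : m = r
      · subst hm; simp
      · rw [if_neg (by omega), if_neg hm]; ring
  calc ∑ a ∈ Finset.range (r+1), (-1:ℤ)^a * (r.choose a) * str (R := ℤ) κ m ((a:ℤ)*κ)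
      = ((m.factorial : ℤ) * κ^m) * ∑ a ∈ Finset.range (r+1),
          (-1:ℤ)^a * (r.choose a) * (a.choose m) := by
        rw [Finset.mul_sum]
        apply Finset.sum_congr rfl
        intro a _
        rw [str_nat_mul, Nat.descFactorial_eq_factorial_mul_choose]
        push_cast
        ring
    _ = if m = r then (-1:ℤ)^r * ((r.factorial : ℤ) * κ^r) else 0 := by
        rw [key]
        by_cases hm : m = r
        · subst hm; simp [mul_comm]
        · simp [hm]

private lemma str_cast {n : ℕ} (κ : ℤ) (m : ℕ) (z : ℤ) :
    ((str (R:=ℤ) κ m z : ℤ) : MvPolynomial (Fin n) ℤ)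
      = str κ m ((z : ℤ) : MvPolynomial (Fin n) ℤ) := by
  simp only [str]
  push_cast
  rfl

private lemma eval_sum_helper (κ : ℤ) {n l : ℕ} (r : Fin l → ℕ) (s : Fin l → ℤ)
    (f : MvPolynomial (Fin l) (MvPolynomial (Fin n) ℤ)) :
    ∑ a ∈ Fintype.piFinset (fun i : Fin l => Finset.range (r i + 1)),
      (∏ i, (-1:ℤ)^(a i) * ((r i).choose (a i))) •
        (MvPolynomial.aeval
          (fun i => ((s i + (a i : ℤ)*κ : ℤ) : MvPolynomial (Fin n) ℤ)) f)
    = ∑ u ∈ f.support, (∏ i, SS κ (r i) (s i) (u i)) • MvPolynomial.coeff u f := by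
  calc ∑ a ∈ Fintype.piFinset (fun i : Fin l => Finset.range (r i + 1)),
      (∏ i, (-1:ℤ)^(a i) * ((r i).choose (a i))) •
        (MvPolynomial.aeval
          (fun i => ((s i + (a i : ℤ)*κ : ℤ) : MvPolynomial (Fin n) ℤ)) f)
      = ∑ a ∈ Fintype.piFinset (fun i : Fin l => Finset.range (r i + 1)),
        (∏ i, (-1:ℤ)^(a i) * ((r i).choose (a i))) •
          ∑ u ∈ f.support,
            (∏ i, (s i + (a i : ℤ)*κ)^(u i)) • MvPolynomial.coeff u f := by
        refine Finset.sum_congr rfl ?_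
        intro a _
        congr 1
        conv_lhs => rw [f.as_sum]
        rw [map_sum]
        refine Finset.sum_congr rfl ?_
        intro u _
        rw [MvPolynomial.aeval_monomial, Finsupp.prod_pow]
        have hcast : ((∏ i, (s i + (a i:ℤ)*κ)^(u i) : ℤ) : MvPolynomial (Fin n) ℤ)
          = ∏ i, ((s i + (a i:ℤ)*κ : ℤ) : MvPolynomial (Fin n) ℤ)^(u i) := by
          push_cast
          rfl
        rw [zsmul_eq_mul, hcast, mul_comm]
        simp
    _ = ∑ u ∈ f.support,
        (∑ a ∈ Fintype.piFinset (fun i : Fin l => Finset.range (r i + 1)),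
          (∏ i, (-1:ℤ)^(a i) * ((r i).choose (a i))) * ∏ i, (s i + (a i : ℤ)*κ)^(u i)) •
            MvPolynomial.coeff u f := by
        simp only [Finset.smul_sum, smul_smul]
        rw [Finset.sum_comm]
        simp only [Finset.sum_smul]
    _ = ∑ u ∈ f.support, (∏ i, SS κ (r i) (s i) (u i)) • MvPolynomial.coeff u f := by
        refine Finset.sum_congr rfl ?_
        intro u _
        congr 1
        have h1 : ∀ a ∈ Fintype.piFinset (fun i : Fin l => Finset.range (r i + 1)),
          (∏ i, (-1:ℤ)^(a i) * ((r i).choose (a i))) * ∏ i, (s i + (a i : ℤ)*κ)^(u i)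
          = ∏ i, ((-1:ℤ)^(a i) * ((r i).choose (a i)) * (s i + (a i : ℤ)*κ)^(u i)) := by
          intro a _
          rw [← Finset.prod_mul_distrib]
        rw [Finset.sum_congr rfl h1]
        exact (Finset.prod_univ_sum (fun i => Finset.range (r i + 1))
          (fun i b => (-1:ℤ)^b * ((r i).choose b) * (s i + (b:ℤ)*κ)^(u i))).symm

private lemma eval_str_sum (κ : ℤ) {n l : ℕ} (d : ℕ) (r : Fin l → ℕ)
    (c : (Fin l → ℕ) → MvPolynomial (Fin n) ℤ) (hbox : ∀ i, r i ≤ d) :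
    ∑ a ∈ Fintype.piFinset (fun i : Fin l => Finset.range (r i + 1)),
      (∏ i, (-1:ℤ)^(a i) * ((r i).choose (a i))) •
        (MvPolynomial.aeval (fun i => (((0:ℤ) + (a i : ℤ)*κ : ℤ) : MvPolynomial (Fin n) ℤ))
          (∑ m ∈ Fintype.piFinset (fun _ : Fin l => Finset.range (d + 1)),
            MvPolynomial.C (c m) * ∏ i, str κ (m i) (MvPolynomial.X i)))
    = (∏ i, ((-1:ℤ)^(r i) * (((r i).factorial : ℤ) * κ^(r i)))) • c r := by
  simp only [zero_add]
  have heval : ∀ a : Fin l → ℕ,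
      (MvPolynomial.aeval (fun i => (((a i : ℤ)*κ : ℤ) : MvPolynomial (Fin n) ℤ))
          (∑ m ∈ Fintype.piFinset (fun _ : Fin l => Finset.range (d + 1)),
            MvPolynomial.C (c m) * ∏ i, str κ (m i) (MvPolynomial.X i)))
      = ∑ m ∈ Fintype.piFinset (fun _ : Fin l => Finset.range (d + 1)),
          (∏ i, (str (R:=ℤ) κ (m i) ((a i : ℤ)*κ) : ℤ)) • c m := by
    intro a
    rw [map_sum]
    refine Finset.sum_congr rfl ?_
    intro m _
    rw [map_mul, MvPolynomial.aeval_C, map_prod]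
    have h2 : ∀ i : Fin l,
        (MvPolynomial.aeval (fun i => (((a i : ℤ)*κ : ℤ) : MvPolynomial (Fin n) ℤ)))
          (str κ (m i) (MvPolynomial.X i : MvPolynomial (Fin l) (MvPolynomial (Fin n) ℤ)))
        = ((str (R:=ℤ) κ (m i) ((a i : ℤ)*κ) : ℤ) : MvPolynomial (Fin n) ℤ) := by
      intro i
      rw [str_cast]
      simp only [str, map_prod, map_sub, map_intCast, MvPolynomial.aeval_X]
    rw [Finset.prod_congr rfl (fun i _ => h2 i)]
    have h3 : ((∏ i, (str (R:=ℤ) κ (m i) ((a i : ℤ)*κ) : ℤ) : ℤ) : MvPolynomial (Fin n) ℤ)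
        = ∏ i, ((str (R:=ℤ) κ (m i) ((a i : ℤ)*κ) : ℤ) : MvPolynomial (Fin n) ℤ) := by
      push_cast
      rfl
    rw [zsmul_eq_mul, ← h3, mul_comm]
    simp
  simp only [heval]
  calc ∑ a ∈ Fintype.piFinset (fun i : Fin l => Finset.range (r i + 1)),
      (∏ i, (-1:ℤ)^(a i) * ((r i).choose (a i))) •
        ∑ m ∈ Fintype.piFinset (fun _ : Fin l => Finset.range (d + 1)),
          (∏ i, (str (R:=ℤ) κ (m i) ((a i : ℤ)*κ) : ℤ)) • c m
      = ∑ m ∈ Fintype.piFinset (fun _ : Fin l => Finset.range (d + 1)),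
        (∑ a ∈ Fintype.piFinset (fun i : Fin l => Finset.range (r i + 1)),
          (∏ i, (-1:ℤ)^(a i) * ((r i).choose (a i))) *
            ∏ i, (str (R:=ℤ) κ (m i) ((a i : ℤ)*κ) : ℤ)) • c m := by
        simp only [Finset.smul_sum, smul_smul]
        rw [Finset.sum_comm]
        simp only [Finset.sum_smul]
    _ = ∑ m ∈ Fintype.piFinset (fun _ : Fin l => Finset.range (d + 1)),
        (∏ i, (if m i = r i then (-1:ℤ)^(r i) * (((r i).factorial : ℤ) * κ^(r i)) else 0)) • c m := by
        refine Finset.sum_congr rfl ?_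
        intro m _
        congr 1
        have h1 : ∀ a ∈ Fintype.piFinset (fun i : Fin l => Finset.range (r i + 1)),
            (∏ i, (-1:ℤ)^(a i) * ((r i).choose (a i))) *
              ∏ i, (str (R:=ℤ) κ (m i) ((a i : ℤ)*κ) : ℤ)
            = ∏ i, ((-1:ℤ)^(a i) * ((r i).choose (a i)) * str (R:=ℤ) κ (m i) ((a i : ℤ)*κ)) := by
          intro a _
          rw [← Finset.prod_mul_distrib]
        rw [Finset.sum_congr rfl h1]
        rw [(Finset.prod_univ_sum (fun i => Finset.range (r i + 1))
          (fun i b => (-1:ℤ)^b * ((r i).choose b) * str (R:=ℤ) κ (m i) ((b:ℤ)*κ))).symm]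
        exact Finset.prod_congr rfl (fun i _ => orth κ (r i) (m i))
    _ = (∏ i, ((-1:ℤ)^(r i) * (((r i).factorial : ℤ) * κ^(r i)))) • c r := by
        rw [Finset.sum_eq_single r]
        · rw [Finset.prod_congr rfl (fun i _ => if_pos rfl)]
        · intro m _ hmr
          obtain ⟨i, hi⟩ := Function.ne_iff.mp hmr
          rw [Finset.prod_eq_zero (Finset.mem_univ i)
            (show (if m i = r i then (-1:ℤ)^(r i) * (((r i).factorial : ℤ) * κ^(r i)) else 0) = 0
              from if_neg hi), zero_smul]
        · intro hr
          exact absurd (Fintype.mem_piFinset.mpr (fun i => Finset.mem_range.mpr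
            (Nat.lt_succ_of_le (hbox i)))) hr

/-- for coprime `0 < κ < N`, a sequence `r = (r_1,…,r_l)` of nonnegative
integers with `N_r` the least positive integer such that `N ∣ N_r(r_i+1)` for all `i`,
and any `f ∈ ℤ[z_1,…,z_n][t_1,…,t_l]`, the difference `r`-integral of the discrete
`t_j`-differential `D_{t_j} f = f(t) − f(t_1,…,t_j−κ,…,t_l)` vanishes modulo `N`:
writing `D_{t_j} f = Σ_m c_m(z)·∏_i [t_i]_{m_i}` in the string basis, every coefficient
of `N_r·c_r` is divisible by `N`. -/
theorem stmt3 (κ N : ℤ) (hκ : 0 < κ) (hκN : κ < N) (hcop : Int.gcd κ N = 1)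
    (n l : ℕ) (r : Fin l → ℕ) (Nr : ℤ)
    (hNr : IsLeast {m : ℤ | 0 < m ∧ ∀ i, N ∣ m * ((r i : ℤ) + 1)} Nr)
    (f : MvPolynomial (Fin l) (MvPolynomial (Fin n) ℤ)) (j : Fin l)
    (d : ℕ) (c : (Fin l → ℕ) → MvPolynomial (Fin n) ℤ)
    (hc0 : ∀ m : Fin l → ℕ, (∃ i, d < m i) → c m = 0)
    (hexp : f - MvPolynomial.aeval
        (fun i : Fin l =>
          if i = j then
            MvPolynomial.X i - (κ : MvPolynomial (Fin l) (MvPolynomial (Fin n) ℤ))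
          else MvPolynomial.X i) f
      = ∑ m ∈ Fintype.piFinset (fun _ : Fin l => Finset.range (d + 1)),
          MvPolynomial.C (c m) * ∏ i, str κ (m i) (MvPolynomial.X i)) :
    ∀ e : Fin n →₀ ℕ, N ∣ Nr * MvPolynomial.coeff e (c r) := by
  intro e
  by_cases hbox : ∀ i, r i ≤ d
  case neg =>
    push_neg at hbox
    rw [hc0 r (by exact ⟨hbox.choose, hbox.choose_spec⟩)]
    simp
  case pos =>
  -- notation
  set P0 : ℤ := ∏ i, (((r i).factorial : ℤ) * κ^(r i)) with hP0def
  set ε : ℤ := ∏ i, (-1:ℤ)^(r i) with hεdef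
  have H0 : ∑ a ∈ Fintype.piFinset (fun i : Fin l => Finset.range (r i + 1)),
      (∏ i, (-1:ℤ)^(a i) * ((r i).choose (a i))) •
        (MvPolynomial.aeval
          (fun i => (((0:ℤ) + (a i : ℤ)*κ : ℤ) : MvPolynomial (Fin n) ℤ)) f)
      = ∑ u ∈ f.support, (∏ i, SS κ (r i) 0 (u i)) • MvPolynomial.coeff u f :=
    eval_sum_helper κ r (fun _ => (0:ℤ)) f
  have H1 : ∑ a ∈ Fintype.piFinset (fun i : Fin l => Finset.range (r i + 1)),
      (∏ i, (-1:ℤ)^(a i) * ((r i).choose (a i))) •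
        (MvPolynomial.aeval
          (fun i => (((if i = j then -κ else 0) + (a i : ℤ)*κ : ℤ) : MvPolynomial (Fin n) ℤ)) f)
      = ∑ u ∈ f.support,
          (∏ i, SS κ (r i) (if i = j then -κ else 0) (u i)) • MvPolynomial.coeff u f :=
    eval_sum_helper κ r (fun i => if i = j then -κ else 0) f
  have hshift : ∀ a : Fin l → ℕ,
      (MvPolynomial.aeval
          (fun i => (((0:ℤ) + (a i : ℤ)*κ : ℤ) : MvPolynomial (Fin n) ℤ)))
        ((MvPolynomial.aeval (fun i : Fin l =>
          if i = j then
            MvPolynomial.X i - (κ : MvPolynomial (Fin l) (MvPolynomial (Fin n) ℤ))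
          else MvPolynomial.X i)) f)
      = (MvPolynomial.aeval
          (fun i => (((if i = j then -κ else 0) + (a i : ℤ)*κ : ℤ) : MvPolynomial (Fin n) ℤ))) f := by
    intro a
    rw [MvPolynomial.comp_aeval_apply]
    have hfun : (fun i : Fin l =>
        (MvPolynomial.aeval
          (fun i => (((0:ℤ) + (a i : ℤ)*κ : ℤ) : MvPolynomial (Fin n) ℤ)))
          (if i = j then
            MvPolynomial.X i - (κ : MvPolynomial (Fin l) (MvPolynomial (Fin n) ℤ))
          else MvPolynomial.X i))
        = (fun i => (((if i = j then -κ else 0) + (a i : ℤ)*κ : ℤ) : MvPolynomial (Fin n) ℤ)) := by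
      funext i
      by_cases hij : i = j
      · rw [if_pos hij, if_pos hij, map_sub, MvPolynomial.aeval_X, map_intCast]
        push_cast
        ring
      · rw [if_neg hij, if_neg hij, MvPolynomial.aeval_X]
    rw [hfun]
  have keyL : ∑ a ∈ Fintype.piFinset (fun i : Fin l => Finset.range (r i + 1)),
      (∏ i, (-1:ℤ)^(a i) * ((r i).choose (a i))) •
        (MvPolynomial.aeval
          (fun i => (((0:ℤ) + (a i : ℤ)*κ : ℤ) : MvPolynomial (Fin n) ℤ))
          (f - (MvPolynomial.aeval (fun i : Fin l =>
            if i = j then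
              MvPolynomial.X i - (κ : MvPolynomial (Fin l) (MvPolynomial (Fin n) ℤ))
            else MvPolynomial.X i)) f))
      = ∑ u ∈ f.support,
          ((∏ i, SS κ (r i) 0 (u i)) - (∏ i, SS κ (r i) (if i = j then -κ else 0) (u i))) •
            MvPolynomial.coeff u f := by
    simp only [map_sub, smul_sub, Finset.sum_sub_distrib]
    have hsh2 : ∑ a ∈ Fintype.piFinset (fun i : Fin l => Finset.range (r i + 1)),
        (∏ i, (-1:ℤ)^(a i) * ((r i).choose (a i))) •
          (MvPolynomial.aeval
            (fun i => (((0:ℤ) + (a i : ℤ)*κ : ℤ) : MvPolynomial (Fin n) ℤ)))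
            ((MvPolynomial.aeval (fun i : Fin l =>
              if i = j then
                MvPolynomial.X i - (κ : MvPolynomial (Fin l) (MvPolynomial (Fin n) ℤ))
              else MvPolynomial.X i)) f)
        = ∑ u ∈ f.support,
            (∏ i, SS κ (r i) (if i = j then -κ else 0) (u i)) • MvPolynomial.coeff u f := by
      rw [← H1]
      exact Finset.sum_congr rfl (fun a _ => by rw [hshift a])
    rw [H0, hsh2, ← Finset.sum_sub_distrib]
    exact Finset.sum_congr rfl (fun u _ => by rw [sub_smul])
  have keyR : ∑ a ∈ Fintype.piFinset (fun i : Fin l => Finset.range (r i + 1)),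
      (∏ i, (-1:ℤ)^(a i) * ((r i).choose (a i))) •
        (MvPolynomial.aeval
          (fun i => (((0:ℤ) + (a i : ℤ)*κ : ℤ) : MvPolynomial (Fin n) ℤ))
          (f - (MvPolynomial.aeval (fun i : Fin l =>
            if i = j then
              MvPolynomial.X i - (κ : MvPolynomial (Fin l) (MvPolynomial (Fin n) ℤ))
            else MvPolynomial.X i)) f))
      = (∏ i, ((-1:ℤ)^(r i) * (((r i).factorial : ℤ) * κ^(r i)))) • c r := by
    refine Eq.trans (Finset.sum_congr rfl (fun a _ => by rw [hexp])) ?_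
    exact eval_str_sum κ d r c hbox
  have key := keyL.symm.trans keyR
  -- extract coefficient e
  have hco := congrArg (MvPolynomial.coeff e) key
  rw [MvPolynomial.coeff_sum] at hco
  simp only [MvPolynomial.coeff_smul, smul_eq_mul] at hco
  -- divisibility of each term
  have hD : ∀ u : Fin l →₀ ℕ,
      (P0 * (((r j : ℕ) : ℤ) + 1) * κ) ∣
        ((∏ i, SS κ (r i) 0 (u i)) - (∏ i, SS κ (r i) (if i = j then -κ else 0) (u i))) := by
    intro u
    have e1 : ∏ i, SS κ (r i) 0 (u i)
        = SS κ (r j) 0 (u j) * ∏ i ∈ Finset.univ.erase j, SS κ (r i) 0 (u i) :=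
      (Finset.mul_prod_erase Finset.univ _ (Finset.mem_univ j)).symm
    have e2 : ∏ i, SS κ (r i) (if i = j then -κ else 0) (u i)
        = SS κ (r j) (-κ) (u j) * ∏ i ∈ Finset.univ.erase j, SS κ (r i) 0 (u i) := by
      rw [← Finset.mul_prod_erase Finset.univ _ (Finset.mem_univ j), if_pos rfl]
      congr 1
      exact Finset.prod_congr rfl (fun i hi => by rw [if_neg (Finset.ne_of_mem_erase hi)])
    rw [e1, e2, ← sub_mul]
    have e3 : SS κ (r j) 0 (u j) - SS κ (r j) (-κ) (u j) = - SS κ ((r j)+1) (-κ) (u j) := by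
      have hp := SS_pascal κ (r j) (u j) (-κ)
      have h0 : (-κ) + κ = 0 := by ring
      rw [h0] at hp
      linarith
    rw [e3]
    obtain ⟨t1, ht1⟩ := SS_dvd κ (u j) ((r j)+1) (-κ)
    obtain ⟨t2, ht2⟩ := Finset.prod_dvd_prod_of_dvd (s := Finset.univ.erase j)
      (fun i => (((r i).factorial:ℤ) * κ^(r i))) (fun i => SS κ (r i) 0 (u i))
      (fun i _ => SS_dvd κ (u i) (r i) 0)
    refine ⟨-(t1 * t2), ?_⟩
    rw [ht1, ht2]
    have e5 : P0 = (((r j).factorial:ℤ) * κ^(r j))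
        * ∏ i ∈ Finset.univ.erase j, (((r i).factorial:ℤ) * κ^(r i)) :=
      (Finset.mul_prod_erase Finset.univ _ (Finset.mem_univ j)).symm
    rw [e5]
    have e6 : (((r j + 1).factorial : ℕ) : ℤ) = (((r j):ℤ)+1) * ((r j).factorial : ℤ) := by
      rw [Nat.factorial_succ]; push_cast; ring
    rw [e6, pow_succ]
    ring
  have hdvdL : (P0 * (((r j : ℕ) : ℤ) + 1) * κ) ∣
      ∑ u ∈ f.support,
        ((∏ i, SS κ (r i) 0 (u i)) - (∏ i, SS κ (r i) (if i = j then -κ else 0) (u i)))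
          * MvPolynomial.coeff e (MvPolynomial.coeff u f) :=
    Finset.dvd_sum (fun u _ => Dvd.dvd.mul_right (hD u) _)
  rw [hco] at hdvdL
  have hP0' : (∏ i, ((-1:ℤ)^(r i) * (((r i).factorial : ℤ) * κ^(r i)))) = ε * P0 :=
    Finset.prod_mul_distrib
  rw [hP0'] at hdvdL
  have hεε : ε * ε = 1 := by
    rw [hεdef, ← Finset.prod_mul_distrib]
    apply Finset.prod_eq_one
    intro i _
    rw [← pow_add]
    exact Even.neg_one_pow ⟨r i, rfl⟩
  have hdvd2 : (P0 * (((r j : ℕ) : ℤ) + 1) * κ) ∣ P0 * MvPolynomial.coeff e (c r) := by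
    have h7 := Dvd.dvd.mul_left hdvdL ε
    have h8 : ε * (ε * P0 * MvPolynomial.coeff e (c r)) = P0 * MvPolynomial.coeff e (c r) := by
      rw [show ε * (ε * P0 * MvPolynomial.coeff e (c r))
        = (ε * ε) * (P0 * MvPolynomial.coeff e (c r)) from by ring, hεε, one_mul]
    rwa [h8] at h7
  have hP0ne : P0 ≠ 0 := by
    rw [hP0def]
    apply Finset.prod_ne_zero_iff.mpr
    intro i _
    exact mul_ne_zero (Int.natCast_ne_zero.mpr (Nat.factorial_ne_zero _))
      (pow_ne_zero _ (ne_of_gt hκ))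
  have h9 : ((((r j : ℕ) : ℤ) + 1) * κ) ∣ MvPolynomial.coeff e (c r) := by
    rw [mul_assoc] at hdvd2
    exact (mul_dvd_mul_iff_left hP0ne).mp hdvd2
  obtain ⟨t, ht⟩ := h9
  obtain ⟨q, hq⟩ := hNr.1.2 j
  exact ⟨q * (κ * t), by rw [ht]; linear_combination (κ*t)*hq⟩
end

section
/- Let κ, N be relatively prime integers with 0 < κ < N, let n_1, n_2 be integers, and let f ∈ ℤ[t,z] be a polynomial in two variables. Write f = Σ_{r=0}^{m} c_r(z)·[t]_r and f = Σ_{r=0}^{m} b_r(z)·[t + n_1 z + n_2]_r with c_r(z), b_r(z) ∈ ℤ[z] (both families of strings are bases of ℤ[z][t] over ℤ[z]). Then the following two subsets of ℤ[z] have the same image in (ℤ/Nℤ)[z]: the set of all sums Σ_{r=0}^{m} g_r(z)·N_r·c_r(z), where each g_r ∈ ℤ[z] is an arbitrary M_r-constant, and the set of all sums Σ_{r=0}^{m} g_r(z)·N_r·b_r(z), where each g_r ∈ ℤ[z] is an arbitrary M_r-constant. (I.e., the module of t-periods of f does not change when the string basis [t]_r is replaced by the shifted basis [t+n_1 z+n_2]_r.)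 -/
/-- `g ∈ ℤ[z]` is an `M`-constant: every coefficient of `g(z) − g(z−κ)` is divisible by `M`. -/
def MConst (κ M : ℤ) (g : Polynomial ℤ) : Prop :=
  ∀ j : ℕ, M ∣ (g - g.comp (Polynomial.X - Polynomial.C κ)).coeff j

/-- `N_r = N / gcd(N, r+1)`, the least positive integer with `N ∣ N_r(r+1)`. -/
def NrZ (N : ℤ) (x : ℕ) : ℤ := N / (Int.gcd N ((x : ℤ) + 1) : ℤ)

/-- `M_r = N / N_r`. -/
def MrZ (N : ℤ) (x : ℕ) : ℤ := N / NrZ N x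

open Polynomial Finset

variable {R : Type*} [CommRing R]

lemma str_zero (κ : ℤ) (x : R) : str κ 0 x = 1 := by simp [str]

lemma str_succ_right (κ : ℤ) (m : ℕ) (x : R) :
    str κ (m + 1) x = str κ m x * (x - ((m : ℤ) * κ : ℤ)) := by
  simp [str, Finset.prod_range_succ]

lemma str_succ_left (κ : ℤ) (m : ℕ) (x : R) :
    str κ (m + 1) x = x * str κ m (x - (κ : R)) := by
  rw [str, Finset.prod_range_succ']
  push_cast
  rw [mul_comm]
  congr 1
  · simp
  · apply Finset.prod_congr rfl
    intro i _
    push_cast [str]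
    ring_nf

lemma str_map {S : Type*} [CommRing S] (φ : R →+* S) (κ : ℤ) (m : ℕ) (x : R) :
    φ (str κ m x) = str κ m (φ x) := by
  simp [str, map_prod, map_sub, map_intCast]

lemma str_add (κ : ℤ) (r : ℕ) (x y : R) :
    str κ r (x + y) = ∑ j ∈ range (r + 1),
      (r.choose j : R) * (str κ j x * str κ (r - j) y) := by
  induction r with
  | zero => simp [str_zero]
  | succ r ih =>
    have key : str κ (r+1) (x+y)
        = ∑ j ∈ range (r + 1), (r.choose j : R) *
            (str κ (j+1) x * str κ (r - j) y)
        + ∑ j ∈ range (r + 1), (r.choose j : R) *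
            (str κ j x * str κ (r - j + 1) y) := by
      rw [str_succ_right, ih, Finset.sum_mul, ← Finset.sum_add_distrib]
      apply Finset.sum_congr rfl
      intro j hj
      simp only [Finset.mem_range] at hj
      have hj' : j ≤ r := by omega
      have h1 : str κ (j+1) x = str κ j x * (x - ((j : ℤ) * κ : ℤ)) :=
        str_succ_right κ j x
      have h2 : str κ (r - j + 1) y = str κ (r - j) y * (y - (((r - j : ℕ) : ℤ) * κ : ℤ)) :=
        str_succ_right κ (r - j) y
      have hsplit : (x + y - ((r : ℤ) * κ : ℤ))
          = (x - ((j : ℤ) * κ : ℤ)) + (y - (((r - j : ℕ) : ℤ) * κ : ℤ)) := by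
        have : ((r - j : ℕ) : ℤ) = (r : ℤ) - (j : ℤ) := by
          exact_mod_cast Int.ofNat_sub hj'
        rw [this]
        push_cast
        ring
      rw [hsplit, h1, h2]; ring
    rw [key, Finset.sum_range_succ' (fun j => ((r+1).choose j : R) *
      (str κ j x * str κ (r + 1 - j) y)) (r+1)]
    have pas : ∀ j, ((r+1).choose (j+1) : R) = (r.choose (j+1) : R) + (r.choose j : R) := by
      intro j; rw [Nat.choose_succ_succ]; push_cast; ring
    have e1 : ∑ j ∈ range (r + 1), ((r+1).choose (j+1) : R) *
        (str κ (j+1) x * str κ (r + 1 - (j+1)) y)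
        = ∑ j ∈ range (r + 1), (r.choose (j+1) : R) *
            (str κ (j+1) x * str κ (r - j) y)
        + ∑ j ∈ range (r + 1), (r.choose j : R) *
            (str κ (j+1) x * str κ (r - j) y) := by
      rw [← Finset.sum_add_distrib]
      apply Finset.sum_congr rfl
      intro j hj
      have : r + 1 - (j + 1) = r - j := by omega
      rw [this, pas]; ring
    rw [e1]
    have e2 : ∑ j ∈ range (r + 1), (r.choose j : R) *
        (str κ j x * str κ (r - j + 1) y)
        = ∑ j ∈ range r, (r.choose (j+1) : R) *
            (str κ (j+1) x * str κ (r - (j+1) + 1) y)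
        + (r.choose 0 : R) * (str κ 0 x * str κ (r - 0 + 1) y) :=
      Finset.sum_range_succ' _ r
    have e3 : ∑ j ∈ range (r + 1), (r.choose (j+1) : R) *
        (str κ (j+1) x * str κ (r - j) y)
        = ∑ j ∈ range r, (r.choose (j+1) : R) *
            (str κ (j+1) x * str κ (r - (j+1) + 1) y) := by
      rw [Finset.sum_range_succ]
      simp only [Nat.choose_succ_self, Nat.cast_zero, zero_mul, add_zero]
      apply Finset.sum_congr rfl
      intro j hj
      simp only [Finset.mem_range] at hj
      congr 3
      omega
    rw [e2, e3]
    simp only [Nat.choose_zero_right, Nat.cast_one, Nat.sub_zero, Nat.add_sub_cancel_left,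
      one_mul, str_zero]
    ring

lemma str_comp (κ : ℤ) (m : ℕ) (u v : R[X]) :
    (str κ m u).comp v = str κ m (u.comp v) := by
  induction m with
  | zero => simp [str_zero]
  | succ m ih => rw [str_succ_right, str_succ_right, mul_comp, sub_comp, intCast_comp, ih]

/-- single step difference -/
lemma str_one_step (κ : ℤ) (d : ℕ) (x : R) :
    str κ (d+1) x - str κ (d+1) (x - (κ : R))
      = ((d:ℤ)+1 : ℤ) * (κ : R) * str κ d (x - (κ : R)) := by
  rw [str_succ_left κ d x, str_succ_right κ d (x - (κ : R))]
  push_cast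
  ring

lemma str_diff_nat (κ : ℤ) (d : ℕ) (w : ℕ) (u : R) :
    ∃ q : R, str κ d u - str κ d (u - ((w : ℤ) * κ : ℤ)) = ((d : ℤ) * κ : ℤ) * q := by
  induction w generalizing u with
  | zero => exact ⟨0, by push_cast; simp⟩
  | succ w ih =>
    obtain ⟨q, hq⟩ := ih u
    cases d with
    | zero => exact ⟨0, by simp [str_zero]⟩
    | succ d =>
      refine ⟨q + str κ d ((u - ((w : ℤ) * κ : ℤ)) - (κ : R)), ?_⟩
      have h2 := str_one_step κ d (u - ((w : ℤ) * κ : ℤ))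
      have harg : (u - ((w : ℤ) * κ : ℤ)) - (κ : R) = u - (((w : ℤ) + 1) * κ : ℤ) := by
        push_cast; ring
      calc str κ (d+1) u - str κ (d+1) (u - ((((w:ℕ)+1 : ℕ) : ℤ) * κ : ℤ))
          = (str κ (d+1) u - str κ (d+1) (u - ((w : ℤ) * κ : ℤ)))
            + (str κ (d+1) (u - ((w : ℤ) * κ : ℤ))
               - str κ (d+1) ((u - ((w : ℤ) * κ : ℤ)) - (κ : R))) := by
            rw [harg]; push_cast; ring_nf
        _ = (((d:ℕ)+1 : ℤ) * κ : ℤ) * q + (((d:ℤ)+1 : ℤ) * (κ : R))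
              * str κ d ((u - ((w : ℤ) * κ : ℤ)) - (κ : R)) := by rw [hq, h2]; push_cast; ring
        _ = ((((d:ℕ)+1 : ℕ) : ℤ) * κ : ℤ) * (q + str κ d ((u - ((w : ℤ) * κ : ℤ)) - (κ : R))) := by
            push_cast; ring

lemma str_diff (κ : ℤ) (d : ℕ) (w : ℤ) (u : R) :
    ∃ q : R, str κ d u - str κ d (u - ((w : ℤ) * κ : ℤ)) = ((d : ℤ) * κ : ℤ) * q := by
  rcases Int.natAbs_eq w with h | h
  · rw [h]; exact str_diff_nat κ d w.natAbs u
  · obtain ⟨q, hq⟩ := str_diff_nat κ d w.natAbs (u - ((w : ℤ) * κ : ℤ))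
    refine ⟨-q, ?_⟩
    have harg : (u - ((w : ℤ) * κ : ℤ)) - (((w.natAbs : ℤ)) * κ : ℤ) = u := by
      have h2 : ((w.natAbs : ℤ)) = -w := by omega
      rw [h2]; push_cast; ring
    rw [harg] at hq
    have : str κ d u - str κ d (u - ((w : ℤ) * κ : ℤ))
        = -(str κ d (u - ((w : ℤ) * κ : ℤ)) - str κ d u) := by ring
    rw [this, hq]; push_cast; ring

lemma str_X_add_C_monic (κ : ℤ) (r : ℕ) (v : R) [Nontrivial R] :
    (str κ r (X + C v)).Monic ∧ (str κ r (X + C v)).natDegree = r := by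
  have hfac : ∀ i : ℕ, (X + C v - (((i : ℤ) * κ : ℤ) : R[X]))
      = X + C (v - (((i : ℤ) * κ : ℤ) : R)) := by
    intro i
    rw [map_sub]
    rw [show ((((i : ℤ) * κ : ℤ)) : R[X]) = C ((((i : ℤ) * κ : ℤ)) : R) by
      simp [Polynomial.C_eq_intCast]]
    ring
  constructor
  · apply monic_prod_of_monic
    intro i _
    rw [hfac i]
    exact monic_X_add_C _
  · rw [str]
    rw [Polynomial.natDegree_prod_of_monic]
    · simp only [hfac, natDegree_X_add_C]
      simp [Finset.sum_const, Finset.card_range]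
    · intro i _
      rw [hfac i]; exact monic_X_add_C _

lemma unique_coeffs {R : Type*} [CommRing R] [Nontrivial R] (P : ℕ → Polynomial R)
    (hmon : ∀ r, (P r).Monic) (hdeg : ∀ r, (P r).natDegree = r) :
    ∀ (n : ℕ) (a : ℕ → R), (∑ r ∈ Finset.range n, C (a r) * P r = 0) →
      ∀ r < n, a r = 0 := by
  intro n
  induction n with
  | zero => intro a _ r hr; omega
  | succ n ih =>
    intro a h r hr
    have hlast : a n = 0 := by
      have := congrArg (fun p => Polynomial.coeff p n) h
      simp only [Polynomial.finset_sum_coeff, Polynomial.coeff_zero] at this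
      rw [Finset.sum_range_succ] at this
      have hz : ∀ j ∈ Finset.range n, (C (a j) * P j).coeff n = 0 := by
        intro j hj
        simp only [Finset.mem_range] at hj
        rw [Polynomial.coeff_C_mul, Polynomial.coeff_eq_zero_of_natDegree_lt (by rw [hdeg]; omega),
          mul_zero]
      rw [Finset.sum_congr rfl hz, Finset.sum_const_zero, zero_add, Polynomial.coeff_C_mul] at this
      have hcn : (P n).coeff n = 1 := by
        have := (hmon n).leadingCoeff
        rwa [Polynomial.leadingCoeff, hdeg] at this
      rw [hcn, mul_one] at this
      exact this
    rcases Nat.lt_succ_iff_lt_or_eq.mp hr with h' | h'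
    · apply ih a ?_ r h'
      rw [Finset.sum_range_succ, hlast] at h
      simpa using h
    · rw [h']; exact hlast

lemma natG (Nn r j : ℕ) (h : j ≤ r) :
    Nat.gcd Nn (j+1) ∣ r.choose j * Nat.gcd Nn (r+1) := by
  have h1 : (j+1) ∣ (r+1) * r.choose j := by
    rw [Nat.add_one_mul_choose_eq]
    exact Dvd.dvd.mul_left dvd_rfl _
  have h2 : Nat.gcd Nn (j+1) ∣ (r+1) * r.choose j := (Nat.gcd_dvd_right Nn (j+1)).trans h1
  have h3 : Nat.gcd Nn (j+1) ∣ Nn * r.choose j :=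
    Dvd.dvd.mul_right (Nat.gcd_dvd_left _ _) _
  have h4 := Nat.dvd_gcd h3 h2
  rw [Nat.gcd_mul_right] at h4
  rwa [mul_comm] at h4

section arith
variable {N : ℤ}

lemma G_pos (r : ℕ) (hN : 0 < N) : 0 < (Int.gcd N ((r : ℤ) + 1) : ℤ) := by
  have : Int.gcd N ((r : ℤ) + 1) ≠ 0 := by
    simp [Int.gcd_eq_zero_iff]
    omega
  positivity

lemma G_dvd (r : ℕ) : (Int.gcd N ((r : ℤ) + 1) : ℤ) ∣ N := Int.gcd_dvd_left _ _

lemma NrZ_mul_G (r : ℕ) : NrZ N r * (Int.gcd N ((r : ℤ) + 1) : ℤ) = N :=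
  Int.ediv_mul_cancel (G_dvd r)

lemma NrZ_pos (hN : 0 < N) (r : ℕ) : 0 < NrZ N r := by
  have h := NrZ_mul_G (N := N) r
  have h2 := G_pos (N := N) r hN
  nlinarith

lemma MrZ_eq_G (hN : 0 < N) (r : ℕ) : MrZ N r = (Int.gcd N ((r : ℤ) + 1) : ℤ) := by
  have h := NrZ_mul_G (N := N) r
  have hne : NrZ N r ≠ 0 := ne_of_gt (NrZ_pos hN r)
  rw [MrZ]
  exact Int.ediv_eq_of_eq_mul_left hne (by rw [mul_comm]; exact h.symm)

lemma N_eq_NrZ_mul_MrZ (hN : 0 < N) (r : ℕ) : N = NrZ N r * MrZ N r := by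
  rw [MrZ_eq_G hN]
  exact (NrZ_mul_G r).symm

lemma intG (r j : ℕ) (h : j ≤ r) :
    (Int.gcd N ((j : ℤ) + 1) : ℤ) ∣ (r.choose j : ℤ) * (Int.gcd N ((r : ℤ) + 1) : ℤ) := by
  have := natG N.natAbs r j h
  have e : ∀ x : ℕ, Int.gcd N ((x : ℤ) + 1) = Nat.gcd N.natAbs (x+1) := by
    intro x
    rw [Int.gcd]
    congr 1
  rw [e j, e r]
  exact_mod_cast this

lemma key1 (hN : 0 < N) (r j : ℕ) (h : j ≤ r) : NrZ N r ∣ (r.choose j : ℤ) * NrZ N j := by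
  set Gj := (Int.gcd N ((j : ℤ) + 1) : ℤ)
  set Gr := (Int.gcd N ((r : ℤ) + 1) : ℤ)
  have hGj : Gj ≠ 0 := ne_of_gt (G_pos j hN)
  rw [← mul_dvd_mul_iff_right hGj]
  have hr : (r.choose j : ℤ) * NrZ N j * Gj = (r.choose j : ℤ) * N := by
    rw [mul_assoc, NrZ_mul_G]
  rw [hr]
  have : (r.choose j : ℤ) * N = NrZ N r * ((r.choose j : ℤ) * Gr) := by
    conv_lhs => rw [← NrZ_mul_G (N := N) r]
    ring
  rw [this]
  exact mul_dvd_mul_left _ (intG r j h)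

end arith

lemma MConst_iff {κ M : ℤ} {g : Polynomial ℤ} :
    MConst κ M g ↔ C M ∣ (g - g.comp (X - C κ)) :=
  (Polynomial.C_dvd_iff_dvd_coeff M _).symm

lemma MConst_zero (κ M : ℤ) : MConst κ M 0 := by
  rw [MConst_iff]; simp

lemma MConst_add {κ M : ℤ} {g h : Polynomial ℤ} (hg : MConst κ M g) (hh : MConst κ M h) :
    MConst κ M (g + h) := by
  rw [MConst_iff] at *
  rw [add_comp]
  have : g + h - (g.comp (X - C κ) + h.comp (X - C κ))
      = (g - g.comp (X - C κ)) + (h - h.comp (X - C κ)) := by ring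
  rw [this]
  exact dvd_add hg hh

lemma MConst_sub {κ M : ℤ} {g h : Polynomial ℤ} (hg : MConst κ M g) (hh : MConst κ M h) :
    MConst κ M (g - h) := by
  rw [MConst_iff] at *
  rw [sub_comp]
  have : g - h - (g.comp (X - C κ) - h.comp (X - C κ))
      = (g - g.comp (X - C κ)) - (h - h.comp (X - C κ)) := by ring
  rw [this]
  exact dvd_sub hg hh

lemma MConst_sum {κ M : ℤ} {ι : Type*} (s : Finset ι) (p : ι → Polynomial ℤ)
    (hp : ∀ i ∈ s, MConst κ M (p i)) : MConst κ M (∑ i ∈ s, p i) := by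
  classical
  induction s using Finset.induction_on with
  | empty => simpa using MConst_zero κ M
  | insert a s hnot ih =>
    rw [Finset.sum_insert hnot]
    exact MConst_add (hp _ (Finset.mem_insert_self _ _))
      (ih (fun i hi => hp i (Finset.mem_insert_of_mem hi)))

lemma intCast_eq_CC (a : ℤ) : ((a : ℤ) : Polynomial ℤ) = C a := by
  simp

lemma mc_key {κ N : ℤ} (hN : 0 < N) (w : ℤ) (u : Polynomial ℤ)
    (hu : u.comp (X - C κ) = u - C (w * κ)) (r j : ℕ) (hjr : j ≤ r) (g : Polynomial ℤ)
    (hg : MConst κ (MrZ N j) g) :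
    MConst κ (MrZ N r)
      (C (((r.choose j : ℤ) * NrZ N j) / NrZ N r) * (str κ (r - j) u * g)) := by
  set d := r - j with hd
  set e := ((r.choose j : ℤ) * NrZ N j) / NrZ N r with he'
  have he : NrZ N r * e = (r.choose j : ℤ) * NrZ N j :=
    Int.mul_ediv_cancel' (key1 hN r j hjr)
  set h := C e * (str κ d u * g) with hh
  rw [MConst_iff]
  have hNr0 : (C (NrZ N r) : Polynomial ℤ) ≠ 0 := by
    simpa using ne_of_gt (NrZ_pos hN r)
  suffices hs : (C N : Polynomial ℤ) ∣ C (NrZ N r) * (h - h.comp (X - C κ)) by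
    have hCN : (C N : Polynomial ℤ) = C (NrZ N r) * C (MrZ N r) := by
      rw [← C_mul, ← N_eq_NrZ_mul_MrZ hN r]
    rw [hCN] at hs
    exact (mul_dvd_mul_iff_left hNr0).mp hs
  set g' := g.comp (X - C κ) with hg'
  set u' := u - C (w * κ) with hu'
  have hcomp : h.comp (X - C κ) = C e * (str κ d u' * g') := by
    rw [hh, mul_comp, C_comp, mul_comp, str_comp, hu]
  rw [hcomp, hh]
  have hCe : C (NrZ N r) * C e = (C ((r.choose j : ℤ) * NrZ N j) : Polynomial ℤ) := by
    rw [← C_mul, he]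
  have halg : C (NrZ N r) * (C e * (str κ d u * g) - C e * (str κ d u' * g'))
      = C ((r.choose j : ℤ) * NrZ N j) * (str κ d u * (g - g'))
        + C ((r.choose j : ℤ) * NrZ N j) * ((str κ d u - str κ d u') * g') := by
    linear_combination (str κ d u * g - str κ d u' * g') * hCe
  rw [halg]
  apply dvd_add
  · obtain ⟨q, hq⟩ := MConst_iff.mp hg
    have hq' : g - g' = C (MrZ N j) * q := hq
    have hCNj : (C N : Polynomial ℤ) = C (NrZ N j) * C (MrZ N j) := by
      rw [← C_mul, ← N_eq_NrZ_mul_MrZ hN j]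
    have : C ((r.choose j : ℤ) * NrZ N j) * (str κ d u * (g - g'))
        = C N * (C (r.choose j : ℤ) * (str κ d u * q)) := by
      rw [hq', hCNj, C_mul]; ring
    exact Dvd.intro _ this.symm
  · obtain ⟨q2, hq2⟩ := str_diff κ d w u
    rw [intCast_eq_CC] at hq2
    have hq2' : str κ d u - str κ d u' = (((d : ℤ) * κ : ℤ) : Polynomial ℤ) * q2 := hq2
    rw [intCast_eq_CC] at hq2'
    have hMjd : MrZ N j ∣ (r.choose j : ℤ) * (d : ℤ) := by
      have h1 : ((j : ℤ) + 1) ∣ (r.choose j : ℤ) * (d : ℤ) := by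
        refine ⟨(r.choose (j+1) : ℤ), ?_⟩
        have h0 := Nat.choose_succ_right_eq r j
        have hcast2 : ((r.choose j * (r - j) : ℕ) : ℤ) = (r.choose j : ℤ) * (d : ℤ) := by
          push_cast [hd]; ring
        rw [← hcast2, ← h0]
        push_cast
        ring
      have h2 : MrZ N j ∣ ((j : ℤ) + 1) := by
        rw [MrZ_eq_G hN]
        exact Int.gcd_dvd_right _ _
      exact h2.trans h1
    have hNdvd : (r.choose j : ℤ) * NrZ N j * ((d : ℤ) * κ) = N * ((((r.choose j : ℤ) * (d : ℤ)) / MrZ N j) * κ) := by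
      obtain ⟨k, hk⟩ := hMjd
      have hkk : ((r.choose j : ℤ) * (d : ℤ)) / MrZ N j = k := by
        rw [hk]
        exact Int.mul_ediv_cancel_left _ (by
          have := MrZ_eq_G (N := N) hN j
          have := G_pos (N := N) j hN
          omega)
      rw [hkk]
      calc (r.choose j : ℤ) * NrZ N j * ((d : ℤ) * κ)
          = ((r.choose j : ℤ) * (d : ℤ)) * NrZ N j * κ := by ring
        _ = (MrZ N j * k) * NrZ N j * κ := by rw [hk]
        _ = NrZ N j * MrZ N j * (k * κ) := by ring
        _ = N * (k * κ) := by rw [← N_eq_NrZ_mul_MrZ hN j]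
    set k2 := (((r.choose j : ℤ) * (d : ℤ)) / MrZ N j) * κ with hk2'
    have h6 : (C ((r.choose j : ℤ) * NrZ N j) : Polynomial ℤ) * C ((d : ℤ) * κ)
        = C N * C k2 := by
      rw [← C_mul, hNdvd, C_mul]
    have : C ((r.choose j : ℤ) * NrZ N j) * ((str κ d u - str κ d u') * g')
        = C N * (C k2 * (q2 * g')) := by
      rw [hq2']
      linear_combination (q2 * g') * h6
    exact Dvd.intro _ this.symm

noncomputable def gP (κ N : ℤ) (u : Polynomial ℤ) (g : ℕ → Polynomial ℤ) : ℕ → Polynomial ℤ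
  | r => g r - ∑ j ∈ (Finset.range r).attach,
      Polynomial.C (((r.choose (j : ℕ) : ℤ) * NrZ N (j : ℕ)) / NrZ N r) *
        (str κ (r - (j : ℕ)) u * gP κ N u g (j : ℕ))
  decreasing_by exact Finset.mem_range.mp j.2

lemma gP_eq (κ N : ℤ) (u : Polynomial ℤ) (g : ℕ → Polynomial ℤ) (r : ℕ) :
    gP κ N u g r = g r - ∑ j ∈ Finset.range r,
      Polynomial.C (((r.choose j : ℤ) * NrZ N j) / NrZ N r) *
        (str κ (r - j) u * gP κ N u g j) := by
  rw [gP]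
  congr 1
  exact Finset.sum_attach (Finset.range r) (fun j => Polynomial.C
    (((r.choose j : ℤ) * NrZ N j) / NrZ N r) * (str κ (r - j) u * gP κ N u g j))

lemma gP_MConst {κ N : ℤ} (hN : 0 < N) (w : ℤ) (u : Polynomial ℤ)
    (hu : u.comp (X - C κ) = u - C (w * κ)) (g : ℕ → Polynomial ℤ) (m : ℕ)
    (hg : ∀ r, r ≤ m → MConst κ (MrZ N r) (g r)) :
    ∀ r, r ≤ m → MConst κ (MrZ N r) (gP κ N u g r) := by
  intro r
  induction r using Nat.strong_induction_on with
  | _ r ih =>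
    intro hrm
    rw [gP_eq]
    apply MConst_sub (hg r hrm)
    apply MConst_sum
    intro j hj
    simp only [Finset.mem_range] at hj
    exact mc_key hN w u hu r j (le_of_lt hj) _ (ih j hj (le_trans (le_of_lt hj) hrm))

lemma claimK {κ N : ℤ} (hN : 0 < N) (u : Polynomial ℤ) (g : ℕ → Polynomial ℤ) (r : ℕ) :
    C (NrZ N r) * g r = ∑ j ∈ Finset.range (r+1),
      C ((r.choose j : ℤ) * NrZ N j) * (str κ (r - j) u * gP κ N u g j) := by
  rw [Finset.sum_range_succ]
  have hlast : (C ((r.choose r : ℤ) * NrZ N r) : Polynomial ℤ) *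
      (str κ (r - r) u * gP κ N u g r) = C (NrZ N r) * gP κ N u g r := by
    simp [Nat.choose_self, str_zero]
  rw [hlast]
  have hterm : ∀ j ∈ Finset.range r,
      (C ((r.choose j : ℤ) * NrZ N j) : Polynomial ℤ) * (str κ (r - j) u * gP κ N u g j)
      = C (NrZ N r) * (C (((r.choose j : ℤ) * NrZ N j) / NrZ N r) *
          (str κ (r - j) u * gP κ N u g j)) := by
    intro j hj
    simp only [Finset.mem_range] at hj
    have he : NrZ N r * (((r.choose j : ℤ) * NrZ N j) / NrZ N r)
        = (r.choose j : ℤ) * NrZ N j :=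
      Int.mul_ediv_cancel' (key1 hN r j (le_of_lt hj))
    conv_rhs => rw [← mul_assoc, ← C_mul, he]
  rw [Finset.sum_congr rfl hterm, ← Finset.mul_sum, ← mul_add]
  congr 1
  rw [gP_eq]
  ring

lemma master {κ N : ℤ} (hN : 0 < N) (w : ℤ) (u : Polynomial ℤ)
    (hu : u.comp (X - C κ) = u - C (w * κ)) (m : ℕ) (c b : ℕ → Polynomial ℤ)
    (hbc : ∀ j, j ≤ m → b j = ∑ r ∈ Finset.Ico j (m+1),
        C ((r.choose j : ℤ)) * (str κ (r - j) u * c r))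
    (g : ℕ → Polynomial ℤ) (hg : ∀ r, r ≤ m → MConst κ (MrZ N r) (g r)) :
    ∃ g' : ℕ → Polynomial ℤ, (∀ r, r ≤ m → MConst κ (MrZ N r) (g' r)) ∧
      ∑ r ∈ Finset.range (m+1), g r * (C (NrZ N r) * c r)
        = ∑ r ∈ Finset.range (m+1), g' r * (C (NrZ N r) * b r) := by
  refine ⟨gP κ N u g, gP_MConst hN w u hu g m hg, ?_⟩
  have hR : ∑ r ∈ Finset.range (m+1), gP κ N u g r * (C (NrZ N r) * b r)
      = ∑ j ∈ Finset.range (m+1), ∑ r ∈ Finset.Ico j (m+1),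
          (C ((r.choose j : ℤ) * NrZ N j) * (str κ (r - j) u * gP κ N u g j)) * c r := by
    apply Finset.sum_congr rfl
    intro j hj
    simp only [Finset.mem_range] at hj
    rw [hbc j (by omega), Finset.mul_sum, Finset.mul_sum]
    apply Finset.sum_congr rfl
    intro r _
    rw [C_mul]
    ring
  rw [hR]
  rw [Finset.sum_comm' (t' := Finset.range (m+1)) (s' := fun r => Finset.range (r+1))
    (by intro x y; simp only [Finset.mem_range, Finset.mem_Ico]; omega)]
  apply Finset.sum_congr rfl
  intro r hr
  rw [← Finset.sum_mul, ← claimK hN u g r]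
  ring

lemma expand_basis (κ : ℤ) (m : ℕ) (v u : Polynomial ℤ) (a : ℕ → Polynomial ℤ) :
    ∑ r ∈ Finset.range (m+1), C (a r) * str κ r ((X + C v) + C u)
    = ∑ j ∈ Finset.range (m+1),
        C (∑ r ∈ Finset.Ico j (m+1), C ((r.choose j : ℤ)) * (str κ (r-j) u * a r)) *
          str κ j (X + C v) := by
  have step1 : ∀ r : ℕ, C (a r) * str κ r ((X + C v) + C u)
      = ∑ j ∈ Finset.range (r+1),
          C (C ((r.choose j : ℤ)) * (str κ (r-j) u * a r)) * str κ j (X + C v) := by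
    intro r
    rw [str_add]
    rw [Finset.mul_sum]
    apply Finset.sum_congr rfl
    intro j _
    have hC : str κ (r - j) (C u : Polynomial (Polynomial ℤ)) = C (str κ (r-j) u) :=
      (str_map (C : Polynomial ℤ →+* Polynomial (Polynomial ℤ)) κ (r-j) u).symm
    rw [hC, map_mul, map_mul]
    rw [show (C (C ((r.choose j : ℤ))) : Polynomial (Polynomial ℤ))
        = ((r.choose j : ℕ) : Polynomial (Polynomial ℤ)) by simp [map_natCast]]
    ring
  rw [Finset.sum_congr rfl (fun r _ => step1 r)]
  rw [Finset.sum_comm' (t' := Finset.range (m+1)) (s' := fun j => Finset.Ico j (m+1))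
    (by intro x y; simp only [Finset.mem_range, Finset.mem_Ico]; omega)]
  apply Finset.sum_congr rfl
  intro j _
  rw [map_sum, Finset.sum_mul]

open Polynomial in
/-- for coprime `0 < κ < N`, integers `n₁, n₂` and `f ∈ ℤ[t,z]` written as
`f = Σ_{r≤m} c_r(z)·[t]_r = Σ_{r≤m} b_r(z)·[t+n₁z+n₂]_r`, the module of `t`-periods
computed with the coefficients `c_r` and the one computed with the coefficients `b_r`
have the same image in `(ℤ/Nℤ)[z]`: every sum `Σ g_r·N_r·c_r` (with `g_r` arbitrary
`M_r`-constants) is congruent mod `N`, coefficientwise, to some sum `Σ g'_r·N_r·b_r`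
(with `g'_r` `M_r`-constants), and vice versa.  Here `ℤ[t,z] = Polynomial (Polynomial ℤ)`
with `t` the outer variable `X` and `z` the inner variable `C X`. -/
theorem stmt4 (κ N : ℤ) (hκ : 0 < κ) (hκN : κ < N) (hcop : Int.gcd κ N = 1)
    (n1 n2 : ℤ) (f : Polynomial (Polynomial ℤ)) (m : ℕ)
    (c b : ℕ → Polynomial ℤ)
    (hc : f = ∑ r ∈ Finset.range (m + 1), C (c r) * str κ r X)
    (hb : f = ∑ r ∈ Finset.range (m + 1),
        C (b r) * str κ r (X + C (C n1 * X + C n2))) :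
    (∀ g : ℕ → Polynomial ℤ, (∀ r, r ≤ m → MConst κ (MrZ N r) (g r)) →
      ∃ g' : ℕ → Polynomial ℤ, (∀ r, r ≤ m → MConst κ (MrZ N r) (g' r)) ∧
        ∀ j : ℕ, N ∣ ((∑ r ∈ Finset.range (m + 1), g r * (C (NrZ N r) * c r)) -
            (∑ r ∈ Finset.range (m + 1), g' r * (C (NrZ N r) * b r))).coeff j) ∧
    (∀ g : ℕ → Polynomial ℤ, (∀ r, r ≤ m → MConst κ (MrZ N r) (g r)) →
      ∃ g' : ℕ → Polynomial ℤ, (∀ r, r ≤ m → MConst κ (MrZ N r) (g' r)) ∧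
        ∀ j : ℕ, N ∣ ((∑ r ∈ Finset.range (m + 1), g r * (C (NrZ N r) * b r)) -
            (∑ r ∈ Finset.range (m + 1), g' r * (C (NrZ N r) * c r))).coeff j) := by
  have hN : 0 < N := by linarith
  set s : Polynomial ℤ := C n1 * X + C n2 with hs
  have hscomp : s.comp (X - C κ) = s - C (n1 * κ) := by
    simp only [hs, add_comp, mul_comp, C_comp, X_comp, map_mul]
    ring
  have hnegcomp : (-s).comp (X - C κ) = -s - C ((-n1) * κ) := by
    rw [neg_comp, hscomp, neg_mul, map_neg]
    ring
  have hmon : ∀ v : Polynomial ℤ, ∀ j : ℕ,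
      (str κ j (X + C v) : Polynomial (Polynomial ℤ)).Monic ∧
      (str κ j (X + C v)).natDegree = j := fun v j => str_X_add_C_monic κ j v
  constructor
  · -- c-side to b-side
    intro g hg
    have hexp := expand_basis κ m s (-s) c
    have hXfix : ((X + C s) + C (-s) : Polynomial (Polynomial ℤ)) = X := by
      rw [map_neg]; ring
    rw [hXfix] at hexp
    set B : ℕ → Polynomial ℤ := fun j => ∑ r ∈ Finset.Ico j (m+1),
      C ((r.choose j : ℤ)) * (str κ (r-j) (-s) * c r) with hB
    have hzero : ∑ j ∈ Finset.range (m + 1), C (b j - B j) * str κ j (X + C s) = 0 := by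
      have h1 : ∑ j ∈ Finset.range (m + 1), C (b j) * str κ j (X + C s)
          = ∑ j ∈ Finset.range (m + 1), C (B j) * str κ j (X + C s) := by
        rw [← hb, hc, hexp]
      simp only [map_sub, sub_mul, Finset.sum_sub_distrib]
      rw [h1]
      ring
    have huniq := unique_coeffs (fun j => str κ j (X + C s))
      (fun j => (hmon s j).1) (fun j => (hmon s j).2) (m+1) (fun j => b j - B j) hzero
    have hbc : ∀ j, j ≤ m → b j = B j := by
      intro j hj
      have h2 : b j - B j = 0 := huniq j (by omega)
      exact sub_eq_zero.mp h2
    obtain ⟨g', hg'c, hsum⟩ := master hN (-n1) (-s) hnegcomp m c b hbc g hg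
    exact ⟨g', hg'c, fun j => by rw [hsum]; simp⟩
  · -- b-side to c-side
    intro g hg
    have hexp := expand_basis κ m 0 s b
    have hXfix : ((X + C (0 : Polynomial ℤ)) + C s : Polynomial (Polynomial ℤ)) = X + C s := by
      simp
    rw [hXfix] at hexp
    simp only [map_zero, add_zero] at hexp
    set B : ℕ → Polynomial ℤ := fun j => ∑ r ∈ Finset.Ico j (m+1),
      C ((r.choose j : ℤ)) * (str κ (r-j) s * b r) with hB
    have hzero : ∑ j ∈ Finset.range (m + 1), C (c j - B j) * str κ j X = 0 := by
      have h1 : ∑ j ∈ Finset.range (m + 1), C (c j) * str κ j X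
          = ∑ j ∈ Finset.range (m + 1), C (B j) * str κ j X := by
        rw [← hc, hb, hexp]
      simp only [map_sub, sub_mul, Finset.sum_sub_distrib]
      rw [h1]
      ring
    have hmon0 : ∀ j : ℕ, (str κ j (X : Polynomial (Polynomial ℤ))).Monic ∧
        (str κ j (X : Polynomial (Polynomial ℤ))).natDegree = j := by
      intro j
      have := hmon 0 j
      simpa using this
    have huniq := unique_coeffs (fun j => str κ j (X : Polynomial (Polynomial ℤ)))
      (fun j => (hmon0 j).1) (fun j => (hmon0 j).2) (m+1) (fun j => c j - B j) hzero
    have hbc : ∀ j, j ≤ m → c j = B j := by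
      intro j hj
      have h2 : c j - B j = 0 := huniq j (by omega)
      exact sub_eq_zero.mp h2
    obtain ⟨g', hg'c, hsum⟩ := master hN n1 s hscomp m b c hbc g hg
    exact ⟨g', hg'c, fun j => by rw [hsum]; simp⟩
end

section
/- Let V = ℂ², let n > 1, let κ be a nonzero complex number, and let f : ℂⁿ → V^{⊗n} be a function satisfying the symmetric qKZ equations: (i) for each a = 1,…,n−1 and every z ∈ ℂⁿ with z_a − z_{a+1} ≠ 1, f(z_1,…,z_{a+1},z_a,…,z_n) = P^{(a,a+1)}R^{(a,a+1)}(z_a−z_{a+1})·f(z); (ii) for every z ∈ ℂⁿ, f(z_1−κ, z_2,…,z_n) = P^{(μ)}·f(z_2,…,z_n,z_1). Then f satisfies the qKZ equations: for each a = 1,…,n and every z ∈ ℂⁿ such that z_a − z_s − κ ≠ 1 for all s < a and z_a − z_s ≠ 1 for all s > a, one has f(z_1,…,z_a−κ,…,z_n) = K_a(z;κ)·f(z). -/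
noncomputable section

/-- Coordinate model of `V^{⊗n}` for `V = ℂ²`: functions on the standard basis
indexed by `Fin n → Fin 2`. -/
abbrev Vtensor (n : ℕ) := (Fin n → Fin 2) → ℂ

/-- `P^{(a,b)}`: the flip of the `a`-th and `b`-th tensor factors of `V^{⊗n}`. -/
def Pop (n : ℕ) (a b : Fin n) : Module.End ℂ (Vtensor n) :=
  LinearMap.funLeft ℂ ℂ (fun idx => idx ∘ Equiv.swap a b)

/-- `R^{(a,b)}(u) = (u − P^{(a,b)})/(u − 1)`, the rational R-matrix acting on the
`a`-th and `b`-th tensor factors of `V^{⊗n}`. -/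
def Rop (n : ℕ) (a b : Fin n) (u : ℂ) : Module.End ℂ (Vtensor n) :=
  (u - 1)⁻¹ • (u • (1 : Module.End ℂ (Vtensor n)) - Pop n a b)

/-- The qKZ operator
`K_a(z;κ) = R^{(a,a−1)}(z_a−z_{a−1}−κ)⋯R^{(a,1)}(z_a−z_1−κ)·R^{(a,n)}(z_a−z_n)⋯R^{(a,a+1)}(z_a−z_{a+1})`. -/
def Kop (n : ℕ) (κ : ℂ) (a : Fin n) (z : Fin n → ℂ) : Module.End ℂ (Vtensor n) :=
  ((((List.finRange n).filter (fun s => s < a)).reverse.map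
      (fun s => Rop n a s (z a - z s - κ))).prod) *
  ((((List.finRange n).filter (fun s => a < s)).reverse.map
      (fun s => Rop n a s (z a - z s))).prod)

/-- `P^{(μ)} = P^{(1,2)}P^{(2,3)}⋯P^{(n−1,n)}`. -/
def Pmu (n : ℕ) : Module.End ℂ (Vtensor n) :=
  (((List.finRange (n - 1)).map
      (fun a => Pop n ⟨a.1, by omega⟩ ⟨a.1 + 1, by have := a.2; omega⟩)).prod)

namespace Stmt6Aux


def Pperm (n : ℕ) (σ : Equiv.Perm (Fin n)) : Module.End ℂ (Vtensor n) :=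
  LinearMap.funLeft ℂ ℂ (fun idx => idx ∘ σ)

lemma Pperm_one (n : ℕ) : Pperm n 1 = 1 := rfl

lemma Pperm_mul (n : ℕ) (σ τ : Equiv.Perm (Fin n)) :
    Pperm n (σ * τ) = Pperm n σ * Pperm n τ := rfl

lemma Pop_eq (n : ℕ) (a b : Fin n) : Pop n a b = Pperm n (Equiv.swap a b) := rfl

lemma mul_swap_eq {n : ℕ} (σ : Equiv.Perm (Fin n)) (p q : Fin n) :
    σ * Equiv.swap p q = Equiv.swap (σ p) (σ q) * σ := by
  rw [Equiv.swap_apply_apply]; group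

lemma Pperm_mul_Rop (n : ℕ) (σ : Equiv.Perm (Fin n)) (p q : Fin n) (u : ℂ) :
    Pperm n σ * Rop n p q u = Rop n (σ p) (σ q) u * Pperm n σ := by
  simp only [Rop, Pop_eq, mul_smul_comm, smul_mul_assoc, mul_sub, sub_mul,
    mul_one, one_mul, ← Pperm_mul, ← mul_swap_eq, Algebra.mul_smul_comm,
    Algebra.smul_mul_assoc]



def cyc (n : ℕ) (s t : Fin n) (hst : s ≤ t) : Equiv.Perm (Fin n) where
  toFun j := if (j : ℕ) = (t : ℕ) then s
    else if h : (s : ℕ) ≤ (j : ℕ) ∧ (j : ℕ) < (t : ℕ) then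
      ⟨(j : ℕ) + 1, by have := t.isLt; omega⟩ else j
  invFun j := if (j : ℕ) = (s : ℕ) then t
    else if h : (s : ℕ) < (j : ℕ) ∧ (j : ℕ) ≤ (t : ℕ) then
      ⟨(j : ℕ) - 1, by have := j.isLt; omega⟩ else j
  left_inv j := by
    have ht := t.isLt
    have hst' : (s : ℕ) ≤ (t : ℕ) := hst
    dsimp only
    by_cases h1 : (j : ℕ) = (t : ℕ)
    · rw [if_pos h1, if_pos rfl]
      exact Fin.ext h1.symm
    · rw [if_neg h1]
      by_cases h2 : (s : ℕ) ≤ (j : ℕ) ∧ (j : ℕ) < (t : ℕ)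
      · rw [dif_pos h2]
        rw [if_neg (by simp only [Fin.val_mk]; omega),
          dif_pos (by simp only [Fin.val_mk]; omega)]
        exact Fin.ext (by simp)
      · rw [dif_neg h2, if_neg (by omega), dif_neg (by omega)]
  right_inv j := by
    have ht := t.isLt
    have hst' : (s : ℕ) ≤ (t : ℕ) := hst
    dsimp only
    by_cases h1 : (j : ℕ) = (s : ℕ)
    · rw [if_pos h1, if_pos rfl]
      exact Fin.ext h1.symm
    · rw [if_neg h1]
      by_cases h2 : (s : ℕ) < (j : ℕ) ∧ (j : ℕ) ≤ (t : ℕ)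
      · rw [dif_pos h2]
        rw [if_neg (by simp only [Fin.val_mk]; omega),
          dif_pos (by simp only [Fin.val_mk]; omega)]
        exact Fin.ext (by simp only [Fin.val_mk]; omega)
      · rw [dif_neg h2, if_neg (by omega), dif_neg (by omega)]

lemma cyc_apply_last {n : ℕ} (s t : Fin n) (hst : s ≤ t) : cyc n s t hst t = s := by
  simp [cyc]

lemma cyc_apply_mid {n : ℕ} (s t : Fin n) (hst : s ≤ t) (j : Fin n)
    (h1 : (s : ℕ) ≤ j) (h2 : (j : ℕ) < t) :
    cyc n s t hst j = ⟨(j : ℕ) + 1, by have := t.isLt; omega⟩ := by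
  have : (j : ℕ) ≠ (t : ℕ) := by omega
  simp only [cyc, Equiv.coe_fn_mk, if_neg this, dif_pos (And.intro h1 h2)]

lemma cyc_apply_out {n : ℕ} (s t : Fin n) (hst : s ≤ t) (j : Fin n)
    (h : (j : ℕ) < s ∨ (t : ℕ) < j) : cyc n s t hst j = j := by
  have h1 : (j : ℕ) ≠ (t : ℕ) := by have := hst; omega
  have h2 : ¬ ((s : ℕ) ≤ j ∧ (j : ℕ) < t) := by omega
  simp only [cyc, Equiv.coe_fn_mk, if_neg h1, dif_neg h2]

lemma cyc_inv_apply_first {n : ℕ} (s t : Fin n) (hst : s ≤ t) :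
    (cyc n s t hst)⁻¹ s = t := by
  rw [Equiv.Perm.inv_def, Equiv.symm_apply_eq, cyc_apply_last]

lemma cyc_inv_apply_mid {n : ℕ} (s t : Fin n) (hst : s ≤ t) (j : Fin n)
    (h1 : (s : ℕ) < j) (h2 : (j : ℕ) ≤ t) :
    (cyc n s t hst)⁻¹ j = ⟨(j : ℕ) - 1, by have := j.isLt; omega⟩ := by
  rw [Equiv.Perm.inv_def, Equiv.symm_apply_eq, cyc_apply_mid s t hst _ (by simp; omega)
    (by simp; omega)]
  exact Fin.ext (by simp; omega)


def cycN (n s t : ℕ) : Equiv.Perm (Fin n) :=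
  if h : s ≤ t ∧ t < n then
    cyc n ⟨s, by omega⟩ ⟨t, h.2⟩ (by exact Fin.mk_le_mk.mpr h.1) else 1

lemma cycN_apply_last {n s t : ℕ} (hst : s ≤ t) (ht : t < n) :
    cycN n s t ⟨t, ht⟩ = ⟨s, by omega⟩ := by
  rw [cycN, dif_pos (And.intro hst ht)]
  exact cyc_apply_last _ _ _

lemma cycN_apply_mid {n s t : ℕ} (hst : s ≤ t) (ht : t < n) (j : Fin n)
    (h1 : s ≤ (j : ℕ)) (h2 : (j : ℕ) < t) :
    cycN n s t j = ⟨(j : ℕ) + 1, by omega⟩ := by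
  rw [cycN, dif_pos (And.intro hst ht)]
  exact cyc_apply_mid _ _ _ _ h1 h2

lemma cycN_apply_out {n s t : ℕ} (hst : s ≤ t) (ht : t < n) (j : Fin n)
    (h : (j : ℕ) < s ∨ t < (j : ℕ)) : cycN n s t j = j := by
  rw [cycN, dif_pos (And.intro hst ht)]
  exact cyc_apply_out _ _ _ _ h

lemma cycN_inv_apply_first {n s t : ℕ} (hst : s ≤ t) (ht : t < n) :
    (cycN n s t)⁻¹ ⟨s, by omega⟩ = ⟨t, ht⟩ := by
  rw [cycN, dif_pos (And.intro hst ht)]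
  exact cyc_inv_apply_first _ _ _

lemma cycN_inv_apply_mid {n s t : ℕ} (hst : s ≤ t) (ht : t < n) (j : Fin n)
    (h1 : s < (j : ℕ)) (h2 : (j : ℕ) ≤ t) :
    (cycN n s t)⁻¹ j = ⟨(j : ℕ) - 1, by have := j.isLt; omega⟩ := by
  rw [cycN, dif_pos (And.intro hst ht)]
  exact cyc_inv_apply_mid _ _ _ _ h1 h2

lemma cycN_self (n s : ℕ) : cycN n s s = 1 := by
  by_cases h : s < n
  · ext j
    by_cases hj : (j : ℕ) = s
    · have : j = ⟨s, h⟩ := Fin.ext hj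
      rw [this, cycN_apply_last le_rfl h]
      simp
    · rw [cycN_apply_out le_rfl h j (by omega)]
      simp
  · rw [cycN, dif_neg (by omega)]

lemma cycN_succ {n s t : ℕ} (hst : s ≤ t) (ht : t + 1 < n) :
    cycN n s (t + 1) = cycN n s t * Equiv.swap ⟨t, by omega⟩ ⟨t + 1, ht⟩ := by
  ext j
  rw [Equiv.Perm.mul_apply]
  rcases Nat.lt_trichotomy (j : ℕ) t with hj | hj | hj
  · -- j < t : swap fixes j
    rw [Equiv.swap_apply_of_ne_of_ne (by simp [Fin.ext_iff]; omega)
      (by simp [Fin.ext_iff]; omega)]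
    rcases Nat.lt_or_ge (j : ℕ) s with h | h
    · rw [cycN_apply_out hst (by omega) j (Or.inl h),
        cycN_apply_out (by omega) ht j (Or.inl h)]
    · rw [cycN_apply_mid hst (by omega) j h hj,
        cycN_apply_mid (by omega) ht j h (by omega)]
  · -- j = t
    have : j = ⟨t, by omega⟩ := Fin.ext hj
    rw [this, Equiv.swap_apply_left, cycN_apply_out hst (by omega) _ (Or.inr (by simp)),
      cycN_apply_mid (by omega) ht _ (by simp; omega) (by simp)]
  · rcases Nat.lt_trichotomy (j : ℕ) (t+1) with hj2 | hj2 | hj2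
    · omega
    · -- j = t+1
      have : j = ⟨t+1, ht⟩ := Fin.ext hj2
      rw [this, Equiv.swap_apply_right, cycN_apply_last hst (by omega),
        cycN_apply_last (by omega) ht]
    · -- j > t+1
      rw [Equiv.swap_apply_of_ne_of_ne (by simp [Fin.ext_iff]; omega)
        (by simp [Fin.ext_iff]; omega),
        cycN_apply_out hst (by omega) j (Or.inr (by omega)),
        cycN_apply_out (by omega) ht j (Or.inr (by omega))]

lemma cycN_succ_left {n s t : ℕ} (hst : s + 1 ≤ t) (ht : t < n) :
    cycN n s t = Equiv.swap ⟨s, by omega⟩ ⟨s + 1, by omega⟩ * cycN n (s + 1) t := by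
  ext j
  rw [Equiv.Perm.mul_apply]
  rcases Nat.lt_trichotomy (j : ℕ) s with hj | hj | hj
  · rw [cycN_apply_out hst ht j (Or.inl (by omega)),
      cycN_apply_out (by omega) ht j (Or.inl (by omega)),
      Equiv.swap_apply_of_ne_of_ne (by simp [Fin.ext_iff]; omega)
        (by simp [Fin.ext_iff]; omega)]
  · -- j = s
    have hjs : j = ⟨s, by omega⟩ := Fin.ext hj
    rw [hjs, cycN_apply_mid (s := s) (t := t) (by omega) ht _ (by simp) (by simp; omega),
      cycN_apply_out (s := s + 1) (t := t) hst ht _ (Or.inl (by simp)),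
      Equiv.swap_apply_left]
  · rcases Nat.lt_trichotomy (j : ℕ) t with hj2 | hj2 | hj2
    · -- s < j < t
      rw [cycN_apply_mid hst ht j (by omega) hj2,
        cycN_apply_mid (by omega) ht j (by omega) hj2]
      rw [Equiv.swap_apply_of_ne_of_ne (by simp [Fin.ext_iff]; omega)
        (by simp [Fin.ext_iff]; omega)]
    · -- j = t
      have hjt : j = ⟨t, ht⟩ := Fin.ext hj2
      rw [hjt, cycN_apply_last hst ht, cycN_apply_last (by omega) ht,
        Equiv.swap_apply_right]
    · rw [cycN_apply_out hst ht j (Or.inr hj2),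
        cycN_apply_out (by omega) ht j (Or.inr hj2),
        Equiv.swap_apply_of_ne_of_ne (by simp [Fin.ext_iff]; omega)
          (by simp [Fin.ext_iff]; omega)]

lemma cycN_comp {n a b c : ℕ} (hab : a ≤ b) (hbc : b ≤ c) (hc : c < n) :
    cycN n a b * cycN n b c = cycN n a c := by
  ext j
  rw [Equiv.Perm.mul_apply]
  rcases Nat.lt_trichotomy (j : ℕ) c with hj | hj | hj
  · rcases Nat.lt_or_ge (j : ℕ) b with hj2 | hj2
    · rw [cycN_apply_out hbc hc j (Or.inl hj2)]
      rcases Nat.lt_or_ge (j : ℕ) a with hj3 | hj3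
      · rw [cycN_apply_out hab (by omega) j (Or.inl hj3),
          cycN_apply_out (by omega) hc j (Or.inl hj3)]
      · rw [cycN_apply_mid hab (by omega) j hj3 hj2,
          cycN_apply_mid (by omega) hc j hj3 (by omega)]
    · rw [cycN_apply_mid hbc hc j hj2 hj,
        cycN_apply_out hab (by omega) _ (Or.inr (by simp; omega)),
        cycN_apply_mid (by omega) hc j (by omega) hj]
  · have hjc : j = ⟨c, hc⟩ := Fin.ext hj
    rw [hjc, cycN_apply_last hbc hc, cycN_apply_last hab (by omega),
      cycN_apply_last (by omega) hc]
  · rw [cycN_apply_out hbc hc j (Or.inr hj),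
      cycN_apply_out hab (by omega) j (Or.inr (by omega)),
      cycN_apply_out (by omega) hc j (Or.inr hj)]

lemma cycN_rotate (m : ℕ) : cycN (m + 1) 0 m = finRotate (m + 1) := by
  ext j
  rcases Nat.lt_trichotomy (j : ℕ) m with hj | hj | hj
  · have hne : j ≠ Fin.last m := by
      intro h; rw [h, Fin.val_last] at hj; omega
    rw [cycN_apply_mid (Nat.zero_le m) (by omega) j (Nat.zero_le _) hj,
      finRotate_succ_apply, Fin.val_add_one, if_neg hne]
  · have hjm : j = Fin.last m := Fin.ext (by rw [Fin.val_last]; exact hj)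
    have hlast : (Fin.last m) = (⟨m, by omega⟩ : Fin (m + 1)) := Fin.ext (by simp)
    rw [hjm, hlast, cycN_apply_last (Nat.zero_le m) (by omega), ← hlast,
      finRotate_succ_apply, Fin.val_add_one, if_pos rfl]
  · have := j.isLt; omega


lemma filter_range_lt (a N : ℕ) :
    (List.range N).filter (fun s => decide (s < a)) = List.range (min a N) := by
  induction N with
  | zero => simp
  | succ N ih =>
    rw [List.range_succ, List.filter_append, ih]
    by_cases h : N < a
    · have h2 : min a (N + 1) = min a N + 1 := by omega
      rw [h2, List.range_succ]
      simp [h]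
      omega
    · have h2 : min a (N + 1) = min a N := by omega
      rw [h2]
      simp [h]

lemma filter_range_gt (a N : ℕ) :
    (List.range N).filter (fun s => decide (a < s)) = List.range' (a + 1) (N - (a + 1)) := by
  induction N with
  | zero => simp
  | succ N ih =>
    rw [List.range_succ, List.filter_append, ih]
    by_cases h : a < N
    · have h2 : N + 1 - (a + 1) = (N - (a + 1)) + 1 := by omega
      rw [h2, List.range'_concat]
      simp [h]
    · have h2 : N + 1 - (a + 1) = N - (a + 1) := by omega
      rw [h2]
      simp [h]

def Gl (n : ℕ) (a : Fin n) (z : Fin n → ℂ) (κ : ℂ) (k : ℕ) : Module.End ℂ (Vtensor n) :=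
  if h : k < n then Rop n a ⟨k, h⟩ (z a - z ⟨k, h⟩ - κ) else 1

def Gr (n : ℕ) (a : Fin n) (z : Fin n → ℂ) (k : ℕ) : Module.End ℂ (Vtensor n) :=
  if h : k < n then Rop n a ⟨k, h⟩ (z a - z ⟨k, h⟩) else 1

lemma ofFn_pop_prod (n : ℕ) (m : ℕ) (hm : m < n) :
    (List.ofFn (fun a : Fin m =>
      Pop n ⟨a.1, by have := a.2; omega⟩ ⟨a.1 + 1, by have := a.2; omega⟩)).prod
      = Pperm n (cycN n 0 m) := by
  induction m with
  | zero =>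
    rw [List.ofFn_zero, List.prod_nil, cycN_self, Pperm_one]
  | succ m ih =>
    rw [List.ofFn_succ', List.prod_concat]
    have e1 : (fun i : Fin m =>
        (fun a : Fin (m + 1) => Pop n ⟨a.1, by have := a.2; omega⟩
          ⟨a.1 + 1, by have := a.2; omega⟩) i.castSucc)
        = (fun a : Fin m => Pop n ⟨a.1, by have := a.2; omega⟩
            ⟨a.1 + 1, by have := a.2; omega⟩) := rfl
    rw [e1, ih (by omega)]
    simp only [Fin.val_last]
    rw [Pop_eq, ← Pperm_mul, ← cycN_succ (Nat.zero_le m) hm]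

lemma Pmu_eq (n : ℕ) (hn : 1 < n) : Pmu n = Pperm n (finRotate n) := by
  obtain ⟨m, rfl⟩ : ∃ m, n = m + 1 := ⟨n - 1, by omega⟩
  rw [Pmu, ← List.ofFn_eq_map]
  exact (ofFn_pop_prod (m + 1) m (by omega)).trans (by rw [cycN_rotate])

lemma prod_range'_rev_succ {M : Type*} [Monoid M] (g : ℕ → M) (k d : ℕ) :
    ((List.range' k (d + 1)).reverse.map g).prod
      = ((List.range' (k + 1) d).reverse.map g).prod * g k := by
  rw [List.range'_succ, List.reverse_cons, List.map_append, List.prod_append]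
  simp

lemma prod_range'_rev_concat {M : Type*} [Monoid M] (g : ℕ → M) (k d : ℕ) :
    ((List.range' k (d + 1)).reverse.map g).prod
      = g (k + d) * ((List.range' k d).reverse.map g).prod := by
  rw [List.range'_concat, List.reverse_append, List.reverse_cons, List.reverse_nil,
    List.nil_append, List.singleton_append, List.map_cons, List.prod_cons, Nat.one_mul]

end Stmt6Aux

open Stmt6Aux

set_option maxHeartbeats 1600000

/-- if `f : ℂⁿ → V^{⊗n}` satisfies the symmetric qKZ equations
(i) `f(…,z_{a+1},z_a,…) = P^{(a,a+1)}R^{(a,a+1)}(z_a−z_{a+1})·f(z)` whenever `z_a−z_{a+1} ≠ 1`,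
(ii) `f(z_1−κ,z_2,…,z_n) = P^{(μ)}·f(z_2,…,z_n,z_1)`,
then `f` satisfies the qKZ equations `f(…,z_a−κ,…) = K_a(z;κ)·f(z)` whenever
`z_a−z_s−κ ≠ 1` for `s < a` and `z_a−z_s ≠ 1` for `s > a`. -/
theorem stmt6 (n : ℕ) (hn : 1 < n) (κ : ℂ) (hκ : κ ≠ 0)
    (f : (Fin n → ℂ) → Vtensor n)
    (hsym : ∀ a b : Fin n, (b : ℕ) = (a : ℕ) + 1 →
      ∀ z : Fin n → ℂ, z a - z b ≠ 1 →
        f (z ∘ Equiv.swap a b) = (Pop n a b * Rop n a b (z a - z b)) (f z))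
    (hshift : ∀ z : Fin n → ℂ,
      f (Function.update z ⟨0, by omega⟩ (z ⟨0, by omega⟩ - κ)) =
        (Pmu n) (f (fun j => z (finRotate n j)))) :
    ∀ (a : Fin n) (z : Fin n → ℂ),
      (∀ s : Fin n, s < a → z a - z s - κ ≠ 1) →
      (∀ s : Fin n, a < s → z a - z s ≠ 1) →
      f (Function.update z a (z a - κ)) = (Kop n κ a z) (f z) := by
  intro a z hl hr
  have ha := a.isLt
  set z' := Function.update z a (z a - κ) with hz'
  have hzp : z' a = z a - κ := Function.update_self a _ z
  -- the key exchange relation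
  have key : ∀ (σ : Equiv.Perm (Fin n)) (p q : Fin n), (q : ℕ) = (p : ℕ) + 1 →
      ∀ w : Fin n → ℂ, w (σ p) - w (σ q) ≠ 1 →
      Pperm n (σ * Equiv.swap p q) (f (w ∘ ⇑(σ * Equiv.swap p q)))
        = Rop n (σ p) (σ q) (w (σ p) - w (σ q)) (Pperm n σ (f (w ∘ ⇑σ))) := by
    intro σ p q hpq w hw
    have h1 : w ∘ ⇑(σ * Equiv.swap p q) = (w ∘ ⇑σ) ∘ ⇑(Equiv.swap p q) := by
      rw [Equiv.Perm.coe_mul]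
      rfl
    rw [h1, hsym p q hpq (w ∘ ⇑σ) hw, Pperm_mul, Module.End.mul_apply, ← Pop_eq,
      Module.End.mul_apply]
    have hPP : ∀ v : Vtensor n, Pop n p q (Pop n p q v) = v := by
      intro v
      rw [← Module.End.mul_apply, Pop_eq, ← Pperm_mul, Equiv.swap_mul_self, Pperm_one,
        Module.End.one_apply]
    rw [hPP, ← Module.End.mul_apply, Pperm_mul_Rop, Module.End.mul_apply]
    rfl
  -- the left induction: moving z_a − κ to the front
  have HL : ∀ d : ℕ, d ≤ (a : ℕ) →
      f z' = (((List.range' ((a : ℕ) - d) d).reverse.map (Gl n a z κ)).prod)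
        ((Pperm n (cycN n ((a : ℕ) - d) (a : ℕ))⁻¹)
          (f (z' ∘ ⇑(cycN n ((a : ℕ) - d) (a : ℕ))⁻¹))) := by
    intro d
    induction d with
    | zero =>
      intro _
      simp only [Nat.sub_zero, cycN_self, inv_one, Pperm_one, List.range'_zero,
        List.reverse_nil, List.map_nil, List.prod_nil, Module.End.one_apply,
        Equiv.Perm.coe_one, Function.comp_id]
    | succ d ih =>
      intro hd
      have hk : (a : ℕ) - d = ((a : ℕ) - (d + 1)) + 1 := by omega
      set k := (a : ℕ) - (d + 1) with hkdef
      have hkn : k + 1 < n := by omega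
      have IH := ih (by omega)
      rw [hk] at IH
      have hswap : (cycN n k (a : ℕ))⁻¹ * Equiv.swap ⟨k, by omega⟩ ⟨k + 1, hkn⟩
          = (cycN n (k + 1) (a : ℕ))⁻¹ := by
        rw [cycN_succ_left (by omega) ha, mul_inv_rev, Equiv.swap_inv, mul_assoc,
          Equiv.swap_mul_self, mul_one]
      have hp : ((cycN n k (a : ℕ))⁻¹) ⟨k, by omega⟩ = a :=
        (cycN_inv_apply_first (by omega) ha).trans (Fin.ext rfl)
      have hq : ((cycN n k (a : ℕ))⁻¹) ⟨k + 1, hkn⟩ = ⟨k, by omega⟩ := by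
        rw [cycN_inv_apply_mid (s := k) (t := (a : ℕ)) (by omega) ha ⟨k + 1, hkn⟩
          (by simp) (by simp; omega)]
        exact Fin.ext (by simp)
      have hkne : (⟨k, by omega⟩ : Fin n) ≠ a := by
        simp only [ne_eq, Fin.ext_iff]
        omega
      have hzq : z' ⟨k, by omega⟩ = z ⟨k, by omega⟩ := Function.update_of_ne hkne _ z
      have hcond : z' (((cycN n k (a : ℕ))⁻¹) ⟨k, by omega⟩)
          - z' (((cycN n k (a : ℕ))⁻¹) ⟨k + 1, hkn⟩) ≠ 1 := by
        rw [hp, hq, hzp, hzq]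
        have hlk := hl ⟨k, by omega⟩ (by rw [Fin.lt_def]; simp; omega)
        intro hcontra
        apply hlk
        rw [← hcontra]
        ring
      have KEY := key ((cycN n k (a : ℕ))⁻¹) ⟨k, by omega⟩ ⟨k + 1, hkn⟩ rfl z' hcond
      rw [hswap, hp, hq, hzp, hzq, sub_right_comm] at KEY
      rw [KEY] at IH
      rw [prod_range'_rev_succ, Module.End.mul_apply,
        show Gl n a z κ k = Rop n a ⟨k, by omega⟩ (z a - z ⟨k, by omega⟩ - κ) from by
          simp only [Gl]; rw [dif_pos (by omega : k < n)]]
      exact IH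
  -- step B: the shift
  have hB : Pperm n (cycN n 0 (a : ℕ))⁻¹ (f (z' ∘ ⇑(cycN n 0 (a : ℕ))⁻¹))
      = Pperm n (cycN n (a : ℕ) (n - 1)) (f (z ∘ ⇑(cycN n (a : ℕ) (n - 1)))) := by
    have h0 : (cycN n 0 (a : ℕ))⁻¹ ⟨0, by omega⟩ = a :=
      (cycN_inv_apply_first (Nat.zero_le _) ha).trans (Fin.ext rfl)
    have hB1 : z' ∘ ⇑(cycN n 0 (a : ℕ))⁻¹
        = Function.update (z ∘ ⇑(cycN n 0 (a : ℕ))⁻¹) ⟨0, by omega⟩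
            ((z ∘ ⇑(cycN n 0 (a : ℕ))⁻¹) ⟨0, by omega⟩ - κ) := by
      funext j
      by_cases hj : j = ⟨0, by omega⟩
      · rw [hj, Function.update_self]
        simp only [Function.comp_apply, h0, hzp]
      · rw [Function.update_of_ne hj]
        simp only [Function.comp_apply]
        apply Function.update_of_ne
        intro hja
        apply hj
        have hji : j = ((cycN n 0 (a : ℕ))⁻¹)⁻¹ ((cycN n 0 (a : ℕ))⁻¹ j) := by simp
        rw [hji, hja, inv_inv]
        rw [show a = (⟨(a : ℕ), ha⟩ : Fin n) from Fin.ext rfl,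
          cycN_apply_last (Nat.zero_le _) ha]
    have hrot : (cycN n 0 (a : ℕ))⁻¹ * finRotate n = cycN n (a : ℕ) (n - 1) := by
      have h1 : finRotate n = cycN n 0 (n - 1) := by
        obtain ⟨m, rfl⟩ : ∃ m, n = m + 1 := ⟨n - 1, by omega⟩
        rw [show m + 1 - 1 = m from by omega, cycN_rotate]
      rw [h1, ← cycN_comp (n := n) (a := 0) (b := (a : ℕ)) (c := n - 1)
        (Nat.zero_le _) (by omega) (by omega), inv_mul_cancel_left]
    have hB2 : f (z' ∘ ⇑(cycN n 0 (a : ℕ))⁻¹)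
        = Pperm n (finRotate n)
            (f (z ∘ ⇑((cycN n 0 (a : ℕ))⁻¹ * finRotate n))) := by
      rw [hB1, hshift (z ∘ ⇑(cycN n 0 (a : ℕ))⁻¹), Pmu_eq n hn]
      rfl
    rw [hB2, ← Module.End.mul_apply, ← Pperm_mul, hrot]
  -- the right induction: moving z_a back from the end
  have HR : ∀ d : ℕ, d ≤ n - 1 - (a : ℕ) →
      Pperm n (cycN n (a : ℕ) ((a : ℕ) + d)) (f (z ∘ ⇑(cycN n (a : ℕ) ((a : ℕ) + d))))
        = (((List.range' (a : ℕ) d).reverse.map (fun k => Gr n a z (k + 1))).prod)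
            (f z) := by
    intro d
    induction d with
    | zero =>
      intro _
      simp only [Nat.add_zero, cycN_self, Pperm_one, List.range'_zero, List.reverse_nil,
        List.map_nil, List.prod_nil, Module.End.one_apply, Equiv.Perm.coe_one,
        Function.comp_id]
    | succ d ih =>
      intro hd
      set m := (a : ℕ) + d with hmdef
      have hm1 : m + 1 < n := by omega
      have hsucc : cycN n (a : ℕ) (m + 1)
          = cycN n (a : ℕ) m * Equiv.swap ⟨m, by omega⟩ ⟨m + 1, hm1⟩ :=
        cycN_succ (by omega) hm1
      have hp : (cycN n (a : ℕ) m) ⟨m, by omega⟩ = a :=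
        (cycN_apply_last (by omega) (by omega)).trans (Fin.ext rfl)
      have hq : (cycN n (a : ℕ) m) ⟨m + 1, hm1⟩ = ⟨m + 1, hm1⟩ :=
        cycN_apply_out (by omega) (by omega) _ (Or.inr (by simp))
      have hcond : z ((cycN n (a : ℕ) m) ⟨m, by omega⟩)
          - z ((cycN n (a : ℕ) m) ⟨m + 1, hm1⟩) ≠ 1 := by
        rw [hp, hq]
        exact hr ⟨m + 1, hm1⟩ (by rw [Fin.lt_def]; simp; omega)
      have KEY := key (cycN n (a : ℕ) m) ⟨m, by omega⟩ ⟨m + 1, hm1⟩ rfl z hcond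
      rw [← hsucc, hp, hq] at KEY
      have hadd : (a : ℕ) + (d + 1) = m + 1 := by omega
      rw [hadd, KEY, ih (by omega), ← Module.End.mul_apply, prod_range'_rev_concat,
        show Gr n a z ((a : ℕ) + d + 1) = Rop n a ⟨m + 1, hm1⟩ (z a - z ⟨m + 1, hm1⟩) from by
          simp only [Gr]; rw [dif_pos (by omega : (a : ℕ) + d + 1 < n)]]
  -- assemble
  have hfinal := HL (a : ℕ) le_rfl
  simp only [Nat.sub_self] at hfinal
  rw [hB] at hfinal
  have hRfin := HR (n - 1 - (a : ℕ)) le_rfl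
  rw [show (a : ℕ) + (n - 1 - (a : ℕ)) = n - 1 from by omega] at hRfin
  rw [hRfin, ← Module.End.mul_apply] at hfinal
  rw [hfinal]
  congr 1
  rw [Kop]
  have e1 : (((List.finRange n).filter (fun s => s < a)).reverse.map
        (fun s => Rop n a s (z a - z s - κ)))
      = ((List.range' 0 (a : ℕ)).reverse.map (Gl n a z κ)) := by
    rw [List.map_reverse, List.map_reverse]
    congr 1
    have hfun : (fun s : Fin n => Rop n a s (z a - z s - κ)) = (Gl n a z κ) ∘ Fin.val := by
      funext s
      rw [Function.comp_apply, Gl, dif_pos s.isLt]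
    rw [hfun, ← List.map_map]
    congr 1
    rw [show (fun s : Fin n => decide (s < a)) = (fun m : ℕ => decide (m < (a : ℕ))) ∘ Fin.val
        from funext fun s => by simp only [Function.comp_apply, decide_eq_decide]; exact Fin.lt_def,
      ← List.filter_map, List.map_coe_finRange_eq_range, filter_range_lt,
      min_eq_left (by omega : (a : ℕ) ≤ n), List.range_eq_range']
  have e2 : (((List.finRange n).filter (fun s => a < s)).reverse.map
        (fun s => Rop n a s (z a - z s)))
      = ((List.range' (a : ℕ) (n - 1 - (a : ℕ))).reverse.map (fun k => Gr n a z (k + 1))) := by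
    rw [List.map_reverse, List.map_reverse]
    congr 1
    have hfun : (fun s : Fin n => Rop n a s (z a - z s)) = (Gr n a z) ∘ Fin.val := by
      funext s
      rw [Function.comp_apply, Gr, dif_pos s.isLt]
    rw [hfun, ← List.map_map]
    have hfun2 : (fun k : ℕ => Gr n a z (k + 1)) = (Gr n a z) ∘ (fun k : ℕ => 1 + k) :=
      funext fun k => by rw [Function.comp_apply, Nat.add_comm]
    rw [hfun2, ← List.map_map]
    congr 1
    rw [show (fun s : Fin n => decide (a < s)) = (fun m : ℕ => decide ((a : ℕ) < m)) ∘ Fin.val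
        from funext fun s => by simp only [Function.comp_apply, decide_eq_decide]; exact Fin.lt_def,
      ← List.filter_map, List.map_coe_finRange_eq_range, filter_range_gt, List.map_add_range']
    congr 1 <;> omega
  rw [e1, e2]

end
end

section
/- Let κ, N be relatively prime integers with 0 < κ < N, and let i, r be integers with 0 ≤ i ≤ r. Then N_r divides the integer binom(r,i)·N_i, and for every M_i-constant g ∈ ℤ[z], the polynomial ( binom(r,i)·N_i/N_r )·[z]_{r−i}·g(z) ∈ ℤ[z] is an M_r-constant. -/
open Polynomial

private lemma str_comp_eq (κ : ℤ) (m : ℕ) :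
    (str κ m (X : Polynomial ℤ)).comp (X - C κ) =
      ∏ j ∈ Finset.range m, (X - C (((j : ℤ) + 1) * κ)) := by
  unfold str
  rw [Polynomial.prod_comp]
  refine Finset.prod_congr rfl fun j _ => ?_
  rw [Polynomial.sub_comp, Polynomial.X_comp, Polynomial.intCast_comp]
  have hc : ∀ a : ℤ, ((a : Polynomial ℤ)) = C a := fun a => by simp
  rw [hc, add_mul, one_mul, map_add]
  ring

private lemma str_diff_s12 (κ : ℤ) (m : ℕ) :
    str κ m (X : Polynomial ℤ) - (str κ m (X : Polynomial ℤ)).comp (X - C κ) =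
      C ((m : ℤ) * κ) * (str κ (m - 1) (X : Polynomial ℤ)).comp (X - C κ) := by
  cases m with
  | zero =>
      simp [str]
  | succ m' =>
      rw [str_comp_eq, str_comp_eq]
      have h1 : str κ (m' + 1) (X : Polynomial ℤ)
          = (∏ j ∈ Finset.range m', (X - C (((j : ℤ) + 1) * κ))) * X := by
        unfold str
        rw [Finset.prod_range_succ']
        push_cast
        simp
      have h2 : (m' + 1 - 1 : ℕ) = m' := rfl
      rw [h1, h2, Finset.prod_range_succ]
      push_cast
      ring

/-- for coprime `0 < κ < N` and `0 ≤ i ≤ r`, `N_r` divides `binom(r,i)·N_i`,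
and for every `M_i`-constant `g ∈ ℤ[z]`, the polynomial
`(binom(r,i)·N_i/N_r)·[z]_{r−i}·g(z)` is an `M_r`-constant. -/
theorem stmt12 (κ N : ℤ) (hκ : 0 < κ) (hκN : κ < N) (hcop : Int.gcd κ N = 1)
    (i r : ℕ) (hir : i ≤ r) :
    NrZ N r ∣ (r.choose i : ℤ) * NrZ N i ∧
    ∀ g : Polynomial ℤ, MConst κ (MrZ N i) g →
      MConst κ (MrZ N r)
        (Polynomial.C ((r.choose i : ℤ) * NrZ N i / NrZ N r) *
          str κ (r - i) Polynomial.X * g) := by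
  have hN : (0:ℤ) < N := hκ.trans hκN
  have hNne : N ≠ 0 := hN.ne'
  set Gr : ℤ := (Int.gcd N ((r:ℤ)+1) : ℤ) with hGrdef
  set Gi : ℤ := (Int.gcd N ((i:ℤ)+1) : ℤ) with hGidef
  have hGrdvd : Gr ∣ N := Int.gcd_dvd_left _ _
  have hGidvd : Gi ∣ N := Int.gcd_dvd_left _ _
  have hGi1 : Gi ∣ (i:ℤ)+1 := Int.gcd_dvd_right _ _
  have hNrdef : NrZ N r = N / Gr := rfl
  have hNidef : NrZ N i = N / Gi := rfl
  have hNr : NrZ N r * Gr = N := by rw [hNrdef]; exact Int.ediv_mul_cancel hGrdvd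
  have hNi : NrZ N i * Gi = N := by rw [hNidef]; exact Int.ediv_mul_cancel hGidvd
  have hNrne : NrZ N r ≠ 0 := fun h => hNne (by rw [← hNr, h, zero_mul])
  have hNine : NrZ N i ≠ 0 := fun h => hNne (by rw [← hNi, h, zero_mul])
  have hGine : Gi ≠ 0 := fun h => hNne (by rw [← hNi, h, mul_zero])
  set Cri : ℤ := (r.choose i : ℤ) with hCridef
  -- key divisibility: Gi ∣ Cri * Gr
  have hkey : Gi ∣ Cri * Gr := by
    have h1 : Gi ∣ N * Cri := Dvd.dvd.mul_right hGidvd _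
    have h2 : Gi ∣ ((r:ℤ)+1) * Cri := by
      have hid : ((r:ℤ)+1) * Cri = ((r+1).choose (i+1) : ℤ) * ((i:ℤ)+1) := by
        have hn := Nat.add_one_mul_choose_eq r i
        simp only [hCridef]
        exact_mod_cast hn
      rw [hid]
      exact Dvd.dvd.mul_left hGi1 _
    have h3 : Gi ∣ ((Int.gcd (N * Cri) (((r:ℤ)+1) * Cri) : ℕ) : ℤ) := Int.dvd_coe_gcd h1 h2
    rwa [Int.gcd_mul_right, Nat.cast_mul, Int.natAbs_natCast, mul_comm, ← hGrdef] at h3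
  obtain ⟨t, ht⟩ := hkey
  -- part 1
  have part1 : NrZ N r ∣ Cri * NrZ N i := by
    refine ⟨t, mul_right_cancel₀ hGine ?_⟩
    linear_combination Cri * hNi + NrZ N r * ht - Cri * hNr
  set d : ℤ := Cri * NrZ N i / NrZ N r with hddef
  have hd : d * NrZ N r = Cri * NrZ N i := Int.ediv_mul_cancel part1
  have hdGi : d * Gi = Cri * Gr := by
    refine mul_right_cancel₀ hNrne ?_
    linear_combination Gi * hd + Cri * hNi - Cri * hNr
  -- Gr ∣ d * (r - i)
  have hdm : Gr ∣ d * ((r - i : ℕ) : ℤ) := by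
    have hid : Cri * ((r - i : ℕ) : ℤ) = (r.choose (i+1) : ℤ) * ((i:ℤ)+1) := by
      simp only [hCridef]
      exact_mod_cast (Nat.choose_succ_right_eq r i).symm
    obtain ⟨s, hs⟩ := hGi1
    have hNd : N ∣ Cri * ((r - i : ℕ) : ℤ) * NrZ N i := by
      refine ⟨(r.choose (i+1) : ℤ) * s, ?_⟩
      linear_combination NrZ N i * hid + (NrZ N i * (r.choose (i+1) : ℤ)) * hs
        + ((r.choose (i+1) : ℤ) * s) * hNi
    obtain ⟨w, hw⟩ := hNd
    have h4 : Gr * NrZ N r ∣ (d * ((r - i : ℕ) : ℤ)) * NrZ N r := by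
      refine ⟨w, ?_⟩
      linear_combination ((r - i : ℕ) : ℤ) * hd + hw - w * hNr
    exact (mul_dvd_mul_iff_right hNrne).mp h4
  have hMr : MrZ N r = Gr := by
    rw [MrZ]
    nth_rewrite 1 [← hNr]
    exact Int.mul_ediv_cancel_left _ hNrne
  have hMi : MrZ N i = Gi := by
    rw [MrZ]
    nth_rewrite 1 [← hNi]
    exact Int.mul_ediv_cancel_left _ hNine
  refine ⟨part1, fun g hg => ?_⟩
  -- polynomial part
  intro j
  rw [hMr]
  have hg' : C Gi ∣ g - g.comp (X - C κ) := by
    rw [C_dvd_iff_dvd_coeff]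
    intro n
    rw [← hMi]
    exact hg n
  obtain ⟨u, hu⟩ := hg'
  set m : ℕ := r - i with hmdef
  set S : Polynomial ℤ := str κ m X with hSdef
  set S' : Polynomial ℤ := str κ (m - 1) X with hS'def
  set h : Polynomial ℤ := C d * S * g with hhdef
  have hcomp : h.comp (X - C κ) = C d * S.comp (X - C κ) * g.comp (X - C κ) := by
    rw [hhdef, Polynomial.mul_comp, Polynomial.mul_comp, Polynomial.C_comp]
  have hsplit : h - h.comp (X - C κ)
      = C (d * (m : ℤ) * κ) * (S'.comp (X - C κ) * g)
        + C (d * Gi) * (S.comp (X - C κ) * u) := by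
    have e2 : S - S.comp (X - C κ) = C ((m : ℤ) * κ) * S'.comp (X - C κ) := str_diff_s12 κ m
    calc h - h.comp (X - C κ)
        = C d * ((S - S.comp (X - C κ)) * g
            + S.comp (X - C κ) * (g - g.comp (X - C κ))) := by rw [hcomp, hhdef]; ring
      _ = C d * (C ((m : ℤ) * κ) * S'.comp (X - C κ) * g
            + S.comp (X - C κ) * (C Gi * u)) := by rw [e2, hu]
      _ = _ := by simp only [C_mul]; ring
  suffices hdv : C Gr ∣ h - h.comp (X - C κ) by
    obtain ⟨v, hv⟩ := hdv
    exact ⟨v.coeff j, by rw [hv, Polynomial.coeff_C_mul]⟩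
  rw [hsplit]
  refine dvd_add (Dvd.dvd.mul_right ?_ _) (Dvd.dvd.mul_right ?_ _)
  · have : Gr ∣ d * (m : ℤ) * κ := Dvd.dvd.mul_right hdm κ
    exact map_dvd Polynomial.C this
  · exact map_dvd Polynomial.C (hdGi ▸ dvd_mul_left Gr Cri)
end

section
/- Let p be a prime and κ an integer not divisible by p. Then in ℤ[t,z] one has [t+z]_p ≡ [t]_p + [z]_p (mod p), i.e. every coefficient of ∏_{i=1}^{p}(t+z−(i−1)κ) − ∏_{i=1}^{p}(t−(i−1)κ) − ∏_{i=1}^{p}(z−(i−1)κ) is divisible by p. -/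
open Polynomial in
lemma univ_prod_X_sub_C (p : ℕ) [Fact p.Prime] :
    ∏ a : ZMod p, (Polynomial.X - Polynomial.C a) = Polynomial.X ^ p - Polynomial.X := by
  have hp := Fact.out (p := p.Prime)
  have hq : Fintype.card (ZMod p) = p := ZMod.card p
  have h1 : (Polynomial.X ^ p - Polynomial.X : (ZMod p)[X]).Monic := by
    apply Polynomial.monic_X_pow_sub
    rw [Polynomial.degree_X]
    exact_mod_cast Nat.cast_lt.mpr hp.one_lt
  have hroots : (Polynomial.X ^ p - Polynomial.X : (ZMod p)[X]).roots = Finset.univ.val := by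
    have := FiniteField.roots_X_pow_card_sub_X (ZMod p)
    rwa [hq] at this
  have hdeg : (Polynomial.X ^ p - Polynomial.X : (ZMod p)[X]).natDegree = p :=
    FiniteField.X_pow_card_sub_X_natDegree_eq (ZMod p) hp.one_lt
  have hcard : (Polynomial.X ^ p - Polynomial.X : (ZMod p)[X]).roots.card
      = (Polynomial.X ^ p - Polynomial.X : (ZMod p)[X]).natDegree := by
    rw [hroots, hdeg]; simp [hq]
  have := Polynomial.prod_multiset_X_sub_C_of_monic_of_roots_card_eq h1 hcard
  rw [hroots] at this
  rw [← this]
  rfl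

lemma alg_prod {R : Type*} [CommRing R] (p : ℕ) [Fact p.Prime] [Algebra (ZMod p) R] (x : R) :
    ∏ a : ZMod p, (x - algebraMap (ZMod p) R a) = x ^ p - x := by
  have := congrArg (Polynomial.aeval x) (univ_prod_X_sub_C p)
  simpa using this

lemma reindex {R : Type*} [CommRing R] (p : ℕ) [Fact p.Prime] [Algebra (ZMod p) R]
    (κ : ℤ) (hκ : ¬ (p : ℤ) ∣ κ) (x : R) :
    ∏ i ∈ Finset.range p, (x - algebraMap (ZMod p) R (((i : ℤ) * κ : ℤ) : ZMod p))
      = x ^ p - x := by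
  have hp := Fact.out (p := p.Prime)
  have hκ' : ((κ : ZMod p)) ≠ 0 := by
    simpa [ZMod.intCast_zmod_eq_zero_iff_dvd] using hκ
  rw [← alg_prod p x]
  refine Finset.prod_nbij' (fun i => ((i : ZMod p) * (κ : ZMod p)))
    (fun a => (a * (κ : ZMod p)⁻¹).val) ?_ ?_ ?_ ?_ ?_
  · intro i hi; exact Finset.mem_univ _
  · intro a ha; exact Finset.mem_range.mpr (ZMod.val_lt _)
  · intro i hi
    rw [Finset.mem_range] at hi
    simp only [mul_inv_cancel_right₀ hκ']
    exact ZMod.val_natCast_of_lt hi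
  · intro a ha
    simp only [ZMod.natCast_val, ZMod.cast_id]
    exact inv_mul_cancel_right₀ hκ' a
  · intro i hi
    push_cast
    ring_nf

lemma str_map_s17 (p : ℕ) [Fact p.Prime] (κ : ℤ) (hκ : ¬ (p : ℤ) ∣ κ)
    (x : MvPolynomial (Fin 2) ℤ) :
    MvPolynomial.map (Int.castRingHom (ZMod p)) (str κ p x)
      = (MvPolynomial.map (Int.castRingHom (ZMod p)) x) ^ p
        - MvPolynomial.map (Int.castRingHom (ZMod p)) x := by
  rw [str, map_prod]
  rw [← reindex p κ hκ (MvPolynomial.map (Int.castRingHom (ZMod p)) x)]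
  apply Finset.prod_congr rfl
  intro i hi
  rw [map_sub]
  congr 1
  rw [map_intCast]
  simp [MvPolynomial.algebraMap_eq]

/-- for a prime `p` and `κ` not divisible by `p`, one has
`[t+z]_p ≡ [t]_p + [z]_p (mod p)` in `ℤ[t,z]`, coefficientwise.
Here `t = X 0` and `z = X 1` in `MvPolynomial (Fin 2) ℤ`. -/
theorem stmt17 (p : ℕ) (hp : Nat.Prime p) (κ : ℤ) (hκ : ¬ (p : ℤ) ∣ κ) :
    ∀ m : Fin 2 →₀ ℕ,
      (p : ℤ) ∣ MvPolynomial.coeff m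
        (str κ p (MvPolynomial.X 0 + MvPolynomial.X 1 : MvPolynomial (Fin 2) ℤ)
          - str κ p (MvPolynomial.X 0 : MvPolynomial (Fin 2) ℤ)
          - str κ p (MvPolynomial.X 1 : MvPolynomial (Fin 2) ℤ)) := by
  haveI : Fact p.Prime := ⟨hp⟩
  intro m
  rw [← ZMod.intCast_zmod_eq_zero_iff_dvd]
  suffices h : MvPolynomial.map (Int.castRingHom (ZMod p))
        (str κ p (MvPolynomial.X 0 + MvPolynomial.X 1 : MvPolynomial (Fin 2) ℤ)
          - str κ p (MvPolynomial.X 0 : MvPolynomial (Fin 2) ℤ)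
          - str κ p (MvPolynomial.X 1 : MvPolynomial (Fin 2) ℤ)) = 0 by
    have h2 := congrArg (MvPolynomial.coeff m) h
    rw [MvPolynomial.coeff_map] at h2
    simpa using h2
  rw [map_sub, map_sub, str_map_s17 p κ hκ, str_map_s17 p κ hκ, str_map_s17 p κ hκ]
  rw [map_add, add_pow_char]
  ring
end
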